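/- arXiv:2501.12944 — 8 statements merged into one kernel-verified Lean document; each statement's English description precedes it below -/
import Mathlib

section
/- Let κ, K, c > 0, p > 1 and T > 0. Let y : ℝ → ℝ be differentiable on [0,T] with y(0) = 0 and y(t) ≥ 0 for all t ∈ [0,T], and suppose that y'(t) ≤ -κ·y(t) + K·y(t)^p + c for all t ∈ [0,T]. If 2c/κ ≤ (κ/(2K))^{1/(p-1)}, then y(t) ≤ 2c/κ for all t ∈ [0,T]. -/
/-!
Set `M = 2c/κ`. As long as `0 ≤ y ≤ M`, the smallness condition gives `K y^p ≤ (κ/2) y`, so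
`y' ≤ (κ/2)(M - y)`: the superlinear term is absorbed by half of the damping. Hence `y` can be
fenced in by `M - M e^{-(κ/2 + 1) t}`, which grows strictly faster than that bound allows and
stays below `M`.
-/

open Set

theorem mul_rpow_le_mul_of_le_rpow {K L p u : ℝ} (hK : 0 < K) (hL : 0 ≤ L) (hp : 1 < p)
    (hu : 0 ≤ u) (huL : u ≤ (L / K) ^ (1 / (p - 1))) : K * u ^ p ≤ L * u := by
  have hpow : u ^ (p - 1) ≤ L / K := by
    rwa [one_div, Real.le_rpow_inv_iff_of_pos hu (by positivity) (by linarith)] at huL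
  calc K * u ^ p = K * u ^ (p - 1) * u := by
        rw [mul_assoc, ← Real.rpow_add_one' hu (by linarith : (0:ℝ) < p - 1 + 1).ne',
          sub_add_cancel]
    _ ≤ K * (L / K) * u := by gcongr
    _ = L * u := by field_simp

/-- The barrier is `B t = M - (M - f a) e^{-(k + 1)(t - a)}`, which satisfies
`B' = (k + 1)(M - B) > k (M - B)`. -/
theorem image_lt_of_deriv_le_mul_sub {f f' : ℝ → ℝ} {a b k M : ℝ}
    (hf : ∀ x ∈ Icc a b, HasDerivWithinAt f (f' x) (Icc a b) x) (ha : f a < M)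
    (bound : ∀ x ∈ Ico a b, f x < M → f' x ≤ k * (M - f x)) :
    ∀ x ∈ Icc a b, f x < M := by
  set B : ℝ → ℝ := fun t => M - (M - f a) * Real.exp (-(k + 1) * (t - a)) with hBdef
  have hBM : ∀ t, B t < M := fun t =>
    sub_lt_self M (mul_pos (sub_pos.2 ha) (Real.exp_pos _))
  have hB : ∀ t, HasDerivAt B ((k + 1) * (M - B t)) t := fun t => by
    refine (((((hasDerivAt_id t).sub_const a).const_mul (-(k + 1))).exp.const_mul
      (M - f a)).const_sub M).congr_deriv ?_
    simp only [hBdef, id]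
    ring
  have hf_right : ∀ x ∈ Ico a b, HasDerivWithinAt f (f' x) (Ici x) x := fun x hx =>
    (hf x (Ico_subset_Icc_self hx)).mono_of_mem_nhdsWithin
      (Filter.mem_of_superset (Icc_mem_nhdsGE hx.2) (Icc_subset_Icc_left hx.1))
  have hfB : ∀ ⦃x⦄, x ∈ Icc a b → f x ≤ B x := by
    refine image_le_of_deriv_right_lt_deriv_boundary
      (fun x hx => (hf x hx).continuousWithinAt) hf_right (by simp [hBdef]) hB ?_
    intro x hx hfx
    have hgap : 0 < M - B x := sub_pos.2 (hBM x)
    calc f' x ≤ k * (M - f x) := bound x hx (hfx ▸ hBM x)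
      _ < (k + 1) * (M - B x) := by rw [hfx]; linarith
  exact fun x hx => (hfB hx).trans_lt (hBM x)

theorem stmt_0_general (κ K c p T : ℝ) (hκ : 0 < κ) (hK : 0 < K) (hc : 0 < c)
    (hp : 1 < p) (y y' : ℝ → ℝ)
    (hderiv : ∀ t ∈ Set.Icc (0:ℝ) T, HasDerivWithinAt y (y' t) (Set.Icc (0:ℝ) T) t)
    (hy0 : y 0 = 0)
    (hynn : ∀ t ∈ Set.Icc (0:ℝ) T, 0 ≤ y t)
    (hineq : ∀ t ∈ Set.Icc (0:ℝ) T, y' t ≤ -κ * y t + K * (y t) ^ p + c)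
    (hsmall : 2 * c / κ ≤ (κ / (2 * K)) ^ (1 / (p - 1))) :
    ∀ t ∈ Set.Icc (0:ℝ) T, y t ≤ 2 * c / κ := by
  set M := 2 * c / κ with hMdef
  have hcM : c = κ / 2 * M := by rw [hMdef]; field_simp
  have bound : ∀ t ∈ Ico 0 T, y t < M → y' t ≤ κ / 2 * (M - y t) := by
    intro t ht hyM
    have ht' := Ico_subset_Icc_self ht
    have habsorb : K * y t ^ p ≤ κ / 2 * y t := by
      refine mul_rpow_le_mul_of_le_rpow hK (by positivity) hp (hynn t ht') ?_
      rw [div_div]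
      exact hyM.le.trans hsmall
    linarith [hineq t ht']
  exact fun t ht =>
    (image_lt_of_deriv_le_mul_sub hderiv (by rw [hy0]; positivity) bound t ht).le

/-- ODE comparison argument. A nonnegative differentiable function
`y` on `[0,T]` with `y 0 = 0` satisfying `y' ≤ -κ y + K y^p + c` stays below `2c/κ`
provided `2c/κ ≤ (κ/(2K))^(1/(p-1))`. -/
theorem stmt_0 (κ K c p T : ℝ) (hκ : 0 < κ) (hK : 0 < K) (hc : 0 < c)
    (hp : 1 < p) (hT : 0 < T) (y y' : ℝ → ℝ)
    (hderiv : ∀ t ∈ Set.Icc (0:ℝ) T, HasDerivWithinAt y (y' t) (Set.Icc (0:ℝ) T) t)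
    (hy0 : y 0 = 0)
    (hynn : ∀ t ∈ Set.Icc (0:ℝ) T, 0 ≤ y t)
    (hineq : ∀ t ∈ Set.Icc (0:ℝ) T, y' t ≤ -κ * y t + K * (y t) ^ p + c)
    (hsmall : 2 * c / κ ≤ (κ / (2 * K)) ^ (1 / (p - 1))) :
    ∀ t ∈ Set.Icc (0:ℝ) T, y t ≤ 2 * c / κ :=
  stmt_0_general κ K c p T hκ hK hc hp y y' hderiv hy0 hynn hineq hsmall
end

section
/- Let 0 < δ < 1 and λ > 0. Then for every t ≥ 0, ∫₀^t e^{−λ(t−s)} (t−s)^{δ−1} ds + λ·∫₀^t e^{−λ(t−s)} (t−s)^{δ} ds + e^{−λt}·t^{δ} ≤ λ^{−δ}·(Γ(δ) + Γ(1+δ) + δ^{−δ}), where Γ denotes the Gamma function. -/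
/-!
Substituting `u = t - s`, each convolution integral is a truncated Gamma integral
`∫₀ᵗ u^(a-1) e^(-λu) du ≤ ∫₀^∞ u^(a-1) e^(-λu) du = λ^(-a) Γ(a)`, with `a = δ` and `a = 1 + δ`.
The boundary term rescales to `λ^(-δ) (λt)^δ e^(-λt)`, and `x^δ ≤ (1 + x)^δ ≤ 1 + x ≤ e^x`
by Bernoulli's inequality, while `1 ≤ δ^(-δ)` since `δ < 1`.
-/

open Real MeasureTheory Set

lemma intervalIntegral_rpow_mul_exp_neg_mul_le {a lam t : ℝ} (ha : 0 < a) (hlam : 0 < lam)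
    (ht : 0 ≤ t) :
    ∫ u in (0:ℝ)..t, u ^ (a - 1) * exp (-(lam * u)) ≤ lam ^ (-a) * Gamma a := by
  have hint : IntegrableOn (fun u : ℝ => u ^ (a - 1) * exp (-(lam * u))) (Ioi 0) := by
    simpa only [rpow_one, neg_mul] using
      integrableOn_rpow_mul_exp_neg_mul_rpow (by linarith : -1 < a - 1) zero_lt_one hlam
  have hnonneg : 0 ≤ᵐ[volume.restrict (Ioi 0)] fun u : ℝ => u ^ (a - 1) * exp (-(lam * u)) := by
    filter_upwards [ae_restrict_mem measurableSet_Ioi] with u (hu : 0 < u)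
    positivity
  calc ∫ u in (0:ℝ)..t, u ^ (a - 1) * exp (-(lam * u))
      = ∫ u in Ioc 0 t, u ^ (a - 1) * exp (-(lam * u)) := intervalIntegral.integral_of_le ht
    _ ≤ ∫ u in Ioi 0, u ^ (a - 1) * exp (-(lam * u)) :=
        setIntegral_mono_set hint hnonneg Ioc_subset_Ioi_self.eventuallyLE
    _ = lam ^ (-a) * Gamma a := by
        rw [integral_rpow_mul_exp_neg_mul_Ioi ha hlam, one_div, inv_rpow hlam.le,
          rpow_neg hlam.le]

lemma intervalIntegral_exp_mul_rpow_sub_le {a lam t : ℝ} (ha : 0 < a) (hlam : 0 < lam)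
    (ht : 0 ≤ t) :
    ∫ s in (0:ℝ)..t, exp (-lam * (t - s)) * (t - s) ^ (a - 1) ≤ lam ^ (-a) * Gamma a := by
  have hsub := intervalIntegral.integral_comp_sub_left
    (fun u : ℝ => u ^ (a - 1) * exp (-(lam * u))) (a := 0) (b := t) t
  simp only [sub_self, sub_zero] at hsub
  simp only [neg_mul, mul_comm (exp _), hsub]
  exact intervalIntegral_rpow_mul_exp_neg_mul_le ha hlam ht

lemma rpow_le_exp {x δ : ℝ} (hx : 0 ≤ x) (hδ0 : 0 ≤ δ) (hδ1 : δ ≤ 1) : x ^ δ ≤ exp x :=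
  calc x ^ δ ≤ (1 + x) ^ δ := rpow_le_rpow hx (by linarith) hδ0
    _ ≤ 1 + δ * x := rpow_one_add_le_one_add_mul_self (by linarith) hδ0 hδ1
    _ ≤ 1 + x := by nlinarith
    _ ≤ exp x := by linarith [add_one_le_exp x]

lemma exp_neg_mul_mul_rpow_le {δ lam t : ℝ} (hδ0 : 0 ≤ δ) (hδ1 : δ ≤ 1) (hlam : 0 < lam)
    (ht : 0 ≤ t) : exp (-lam * t) * t ^ δ ≤ lam ^ (-δ) := by
  have hscale : exp (-lam * t) * t ^ δ = lam ^ (-δ) * ((lam * t) ^ δ / exp (lam * t)) := by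
    rw [mul_rpow hlam.le ht, neg_mul, exp_neg, rpow_neg hlam.le]
    field_simp
  have hbound : (lam * t) ^ δ / exp (lam * t) ≤ 1 :=
    (div_le_one (exp_pos _)).mpr (rpow_le_exp (by positivity) hδ0 hδ1)
  rw [hscale]
  exact mul_le_of_le_one_right (by positivity) hbound

/-- the damped-convolution integral estimate. -/
theorem stmt_5 (δ lam : ℝ) (hδ0 : 0 < δ) (hδ1 : δ < 1) (hlam : 0 < lam)
    (t : ℝ) (ht : 0 ≤ t) :
    (∫ s in (0:ℝ)..t, Real.exp (-lam * (t - s)) * (t - s) ^ (δ - 1)) +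
      lam * (∫ s in (0:ℝ)..t, Real.exp (-lam * (t - s)) * (t - s) ^ δ) +
      Real.exp (-lam * t) * t ^ δ ≤
    lam ^ (-δ) * (Real.Gamma δ + Real.Gamma (1 + δ) + δ ^ (-δ)) := by
  have hconv := intervalIntegral_exp_mul_rpow_sub_le hδ0 hlam ht
  have hconv' : lam * (∫ s in (0:ℝ)..t, exp (-lam * (t - s)) * (t - s) ^ δ)
      ≤ lam ^ (-δ) * Gamma (1 + δ) := by
    have h := intervalIntegral_exp_mul_rpow_sub_le (a := 1 + δ) (by linarith) hlam ht
    rw [add_sub_cancel_left] at h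
    calc lam * (∫ s in (0:ℝ)..t, exp (-lam * (t - s)) * (t - s) ^ δ)
        ≤ lam * (lam ^ (-(1 + δ)) * Gamma (1 + δ)) := mul_le_mul_of_nonneg_left h hlam.le
      _ = lam ^ (-δ) * Gamma (1 + δ) := by
        rw [neg_add, rpow_add hlam, rpow_neg_one]
        field_simp
  have hboundary := exp_neg_mul_mul_rpow_le hδ0.le hδ1.le hlam ht
  have hone : 1 ≤ δ ^ (-δ) := one_le_rpow_of_pos_of_le_one_of_nonpos hδ0 hδ1.le (by linarith)
  have hlam_pow : 0 ≤ lam ^ (-δ) := by positivity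
  nlinarith
end

section
/- Let (X_i)_{i∈ℕ} be independent, identically distributed nonnegative real-valued random variables on a probability space (Ω, F, ℙ), and (λ_i)_{i∈ℕ} nonnegative reals with ℙ(Σ_i λ_i X_i < ∞) = 1. Suppose there exists 0 < α < 1 with ℙ(X₀ > t) ∈ O(t^{−α}) as t → ∞, and that Σ_i λ_i^{α} < ∞. Then ℙ(Σ_i λ_i X_i > t) ∈ O(t^{−α}) as t → ∞ (with implied constant proportional to Σ_i λ_i^{α}). -/
open MeasureTheory ProbabilityTheory Filter Asymptotics Set ENNReal

/-!
Split the event `{∑ λᵢ Xᵢ > t}` according to whether some single term `λᵢ Xᵢ` exceeds `t`.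
By the union bound and the tail of `X₀` scaled by `λᵢ`, this has probability at most
`C t^{-α} ∑ λᵢ^α`. Otherwise the sum equals the sum of the truncations `min (λᵢ Xᵢ) t`, whose
expectations are `∫₀ᵗ ℙ(λᵢ Xᵢ > s) ds ≤ C λᵢ^α t^{1-α}/(1-α)` because `α < 1`; Markov's inequality
at level `t` bounds this part by `C t^{-α} ∑ λᵢ^α / (1-α)`.
-/

section PowerTail

variable {Ω : Type*} [MeasurableSpace Ω] {μ : Measure Ω} {Y : Ω → ℝ} {α C : ℝ}

def HasPowerTail (μ : Measure Ω) (Y : Ω → ℝ) (α C : ℝ) : Prop :=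
  ∀ s : ℝ, 0 < s → μ {ω | s < Y ω} ≤ ENNReal.ofReal (C * s ^ (-α))

lemma exists_le_mul_rpow_neg_of_isBigO {f : ℝ → ℝ} (hf : ∀ s, f s ≤ 1) (hα : 0 ≤ α)
    (h : f =O[atTop] fun t => t ^ (-α)) : ∃ C, 0 < C ∧ ∀ s, 0 < s → f s ≤ C * s ^ (-α) := by
  obtain ⟨c, hc, hbound⟩ := h.exists_pos
  obtain ⟨t₀, ht₀⟩ := eventually_atTop.mp hbound.bound
  set T := max t₀ 1
  refine ⟨max c (T ^ α), lt_max_of_lt_left hc, fun s hs => ?_⟩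
  rcases le_or_gt T s with hTs | hsT
  · calc f s ≤ ‖f s‖ := Real.le_norm_self _
      _ ≤ c * ‖s ^ (-α)‖ := ht₀ s (le_of_max_le_left hTs)
      _ = c * s ^ (-α) := by rw [Real.norm_of_nonneg (by positivity)]
      _ ≤ max c (T ^ α) * s ^ (-α) := by gcongr; exact le_max_left _ _
  · calc f s ≤ 1 := hf s
      _ ≤ (T / s) ^ α := Real.one_le_rpow ((one_le_div hs).2 hsT.le) hα
      _ = T ^ α * s ^ (-α) := by
        rw [Real.div_rpow (by positivity) hs.le, Real.rpow_neg hs.le, div_eq_mul_inv]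
      _ ≤ max c (T ^ α) * s ^ (-α) := by gcongr; exact le_max_right _ _

lemma exists_hasPowerTail_of_isBigO [IsProbabilityMeasure μ] (hα : 0 ≤ α)
    (h : (fun t => (μ {ω | t < Y ω}).toReal) =O[atTop] fun t => t ^ (-α)) :
    ∃ C, 0 < C ∧ HasPowerTail μ Y α C := by
  obtain ⟨C, hC, hle⟩ := exists_le_mul_rpow_neg_of_isBigO
    (fun s => toReal_le_of_le_ofReal zero_le_one (by simpa using prob_le_one)) hα h
  exact ⟨C, hC, fun s hs =>
    (le_ofReal_iff_toReal_le (measure_ne_top _ _) (by positivity)).2 (hle s hs)⟩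

lemma HasPowerTail.of_identDistrib {Ω' : Type*} [MeasurableSpace Ω'] {ν : Measure Ω'}
    {Y' : Ω' → ℝ} (h : HasPowerTail ν Y' α C) (hd : IdentDistrib Y Y' μ ν) :
    HasPowerTail μ Y α C :=
  fun s hs => (hd.measure_mem_eq measurableSet_Ioi).trans_le (h s hs)

lemma HasPowerTail.const_mul (h : HasPowerTail μ Y α C) {a : ℝ} (ha : 0 ≤ a) :
    HasPowerTail μ (fun ω => a * Y ω) α (a ^ α * C) := by
  intro s hs
  rcases ha.eq_or_lt with rfl | ha
  · simp [hs.not_gt]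
  have hset : {ω | s < a * Y ω} = {ω | s / a < Y ω} := by
    ext ω
    simp [div_lt_iff₀ ha, mul_comm]
  rw [hset]
  refine (h _ (div_pos hs ha)).trans_eq (congrArg ENNReal.ofReal ?_)
  rw [Real.rpow_neg (by positivity), Real.div_rpow hs.le ha.le, inv_div, Real.rpow_neg hs.le]
  ring

lemma HasPowerTail.lintegral_min_le (h : HasPowerTail μ Y α C) (hY : AEMeasurable Y μ)
    (hY0 : 0 ≤ᵐ[μ] Y) (hC : 0 ≤ C) (hα : α < 1) {t : ℝ} (ht : 0 < t) :
    ∫⁻ ω, ENNReal.ofReal (min (Y ω) t) ∂μ ≤ ENNReal.ofReal (C * (t ^ (1 - α) / (1 - α))) := by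
  have hint : IntegrableOn (fun s : ℝ => C * s ^ (-α)) (Ioc 0 t) :=
    ((intervalIntegrable_iff_integrableOn_Ioc_of_le ht.le).1
      (intervalIntegral.intervalIntegrable_rpow' (by linarith))).const_mul C
  rw [lintegral_eq_lintegral_meas_lt μ (hY0.mono fun ω hω => le_min hω ht.le)
    (hY.min aemeasurable_const)]
  calc ∫⁻ s in Ioi 0, μ {ω | s < min (Y ω) t}
      ≤ ∫⁻ s in Ioi 0, (Ioc 0 t).indicator (fun s => ENNReal.ofReal (C * s ^ (-α))) s := by
        refine setLIntegral_mono' measurableSet_Ioi fun s hs => ?_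
        by_cases hst : s ≤ t
        · rw [indicator_of_mem (show s ∈ Ioc 0 t from ⟨hs, hst⟩)]
          exact (measure_mono fun ω (hω : s < min (Y ω) t) => hω.trans_le (min_le_left _ _)).trans
            (h s hs)
        · have hempty : {ω | s < min (Y ω) t} = ∅ :=
            eq_empty_of_forall_notMem fun ω hω => hst (hω.out.le.trans (min_le_right _ _))
          rw [hempty, measure_empty]
          exact zero_le
    _ ≤ ∫⁻ s in Ioc 0 t, ENNReal.ofReal (C * s ^ (-α)) :=
        (setLIntegral_le_lintegral _ _).trans_eq (lintegral_indicator measurableSet_Ioc _)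
    _ = ENNReal.ofReal (∫ s in Ioc 0 t, C * s ^ (-α)) :=
        (ofReal_integral_eq_lintegral_ofReal hint
          (ae_restrict_of_forall_mem measurableSet_Ioc fun s hs => by
            have := hs.1; positivity)).symm
    _ = ENNReal.ofReal (C * (t ^ (1 - α) / (1 - α))) := by
        rw [integral_const_mul, ← intervalIntegral.integral_of_le ht.le,
          integral_rpow (Or.inl (by linarith)), Real.zero_rpow (by linarith), sub_zero,
          neg_add_eq_sub]

end PowerTail

lemma measure_lt_tsum_le_tsum_add_div {Ω : Type*} [MeasurableSpace Ω] {μ : Measure Ω}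
    {Z : ℕ → Ω → ℝ≥0∞} (hZ : ∀ i, AEMeasurable (Z i) μ) {t : ℝ≥0∞} (ht0 : t ≠ 0) (ht : t ≠ ∞) :
    μ {ω | t < ∑' i, Z i ω} ≤
      ∑' i, μ {ω | t < Z i ω} + (∑' i, ∫⁻ ω, min (Z i ω) t ∂μ) / t := by
  have hsub : {ω | t < ∑' i, Z i ω} ⊆
      (⋃ i, {ω | t < Z i ω}) ∪ {ω | t ≤ ∑' i, min (Z i ω) t} := by
    intro ω hω
    by_cases hjump : ∃ i, t < Z i ω
    · exact Or.inl (mem_iUnion.2 hjump)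
    · push Not at hjump
      have hω' : t < ∑' i, min (Z i ω) t := by simpa only [min_eq_left (hjump _)] using hω.out
      exact Or.inr hω'.le
  have hmin : ∀ i, AEMeasurable (fun ω => min (Z i ω) t) μ := fun i => (hZ i).min aemeasurable_const
  calc μ {ω | t < ∑' i, Z i ω}
      ≤ μ (⋃ i, {ω | t < Z i ω}) + μ {ω | t ≤ ∑' i, min (Z i ω) t} :=
        (measure_mono hsub).trans (measure_union_le _ _)
    _ ≤ _ := by
        gcongr
        · exact measure_iUnion_le _
        · rw [← lintegral_tsum hmin]
          exact meas_ge_le_lintegral_div (AEMeasurable.tsum hmin) ht0 ht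

lemma ofReal_lt_tsum_ofReal_of_lt_tsum {f : ℕ → ℝ} (hf : ∀ i, 0 ≤ f i) {t : ℝ} (ht : 0 ≤ t)
    (h : t < ∑' i, f i) : ENNReal.ofReal t < ∑' i, ENNReal.ofReal (f i) := by
  by_cases hs : Summable f
  · rw [← ENNReal.ofReal_tsum_of_nonneg hf hs]
    exact (ofReal_lt_ofReal_iff_of_nonneg ht).2 h
  · rw [tsum_eq_zero_of_not_summable hs] at h
    exact absurd h ht.not_gt

theorem measure_lt_tsum_mul_le {Ω : Type*} [MeasurableSpace Ω] {μ : Measure Ω}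
    {X : ℕ → Ω → ℝ} (hmeas : ∀ i, Measurable (X i)) (hnn : ∀ i ω, 0 ≤ X i ω)
    {lam : ℕ → ℝ} (hlam : ∀ i, 0 ≤ lam i) {α C : ℝ} (hα : α < 1)
    (hsum : Summable fun i => lam i ^ α) (hC : 0 ≤ C) (htail : ∀ i, HasPowerTail μ (X i) α C)
    {t : ℝ} (ht : 0 < t) :
    μ {ω | t < ∑' i, lam i * X i ω} ≤
      ENNReal.ofReal ((∑' i, lam i ^ α) * C * (1 + 1 / (1 - α)) * t ^ (-α)) := by
  set S := ∑' i, lam i ^ α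
  have hS : 0 ≤ S := tsum_nonneg fun i => Real.rpow_nonneg (hlam i) α
  have h1α : 0 < 1 - α := by linarith
  have hsum_ofReal : ∀ c, 0 ≤ c → ∑' i, ENNReal.ofReal (lam i ^ α * c) = ENNReal.ofReal (S * c) :=
    fun c hc => by
      rw [← ENNReal.ofReal_tsum_of_nonneg (fun i => by have := hlam i; positivity)
        (hsum.mul_right c), tsum_mul_right]
  have hscaled i := (htail i).const_mul (hlam i)
  have hjumps : ∑' i, μ {ω | ENNReal.ofReal t < ENNReal.ofReal (lam i * X i ω)} ≤
      ENNReal.ofReal (S * (C * t ^ (-α))) := by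
    rw [← hsum_ofReal _ (by positivity)]
    refine ENNReal.tsum_le_tsum fun i => ?_
    simp_rw [ofReal_lt_ofReal_iff_of_nonneg ht.le, ← mul_assoc]
    exact hscaled i t ht
  have htrunc : ∑' i, ∫⁻ ω, min (ENNReal.ofReal (lam i * X i ω)) (ENNReal.ofReal t) ∂μ ≤
      ENNReal.ofReal (S * (C * (t ^ (1 - α) / (1 - α)))) := by
    rw [← hsum_ofReal _ (by positivity)]
    refine ENNReal.tsum_le_tsum fun i => ?_
    simp_rw [← ENNReal.ofReal_min, ← mul_assoc]
    exact (hscaled i).lintegral_min_le ((hmeas i).const_mul _).aemeasurable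
      (ae_of_all _ fun ω => mul_nonneg (hlam i) (hnn i ω)) (by have := hlam i; positivity) hα ht
  calc μ {ω | t < ∑' i, lam i * X i ω}
      ≤ μ {ω | ENNReal.ofReal t < ∑' i, ENNReal.ofReal (lam i * X i ω)} :=
        measure_mono fun ω hω => ofReal_lt_tsum_ofReal_of_lt_tsum
          (fun i => mul_nonneg (hlam i) (hnn i ω)) ht.le hω
    _ ≤ _ := measure_lt_tsum_le_tsum_add_div
        (fun i => ((hmeas i).const_mul _).ennreal_ofReal.aemeasurable)
        (ofReal_ne_zero_iff.2 ht) ofReal_ne_top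
    _ ≤ ENNReal.ofReal (S * (C * t ^ (-α))) +
          ENNReal.ofReal (S * (C * (t ^ (1 - α) / (1 - α)))) / ENNReal.ofReal t := by
        gcongr
    _ = _ := by
        rw [← ENNReal.ofReal_div_of_pos ht, ← ENNReal.ofReal_add (by positivity) (by positivity)]
        congr 1
        rw [show 1 - α = -α + 1 by ring, Real.rpow_add ht, Real.rpow_one]
        field_simp

theorem stmt_12_general {Ω : Type*} [MeasurableSpace Ω] (μ : Measure Ω) [IsProbabilityMeasure μ]
    (X : ℕ → Ω → ℝ) (hmeas : ∀ i, Measurable (X i))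
    (hident : ∀ i, IdentDistrib (X i) (X 0) μ μ)
    (hnn : ∀ i ω, 0 ≤ X i ω)
    (lam : ℕ → ℝ) (hlam : ∀ i, 0 ≤ lam i)
    (α : ℝ) (hα0 : 0 < α) (hα1 : α < 1)
    (htail : (fun t => (μ {ω | t < X 0 ω}).toReal) =O[atTop] fun t => t ^ (-α))
    (hsum : Summable fun i => lam i ^ α) :
    (fun t => (μ {ω | t < ∑' i, lam i * X i ω}).toReal) =O[atTop] fun t => t ^ (-α) := by
  obtain ⟨C, hC, hX0⟩ := exists_hasPowerTail_of_isBigO hα0.le htail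
  have hS : 0 ≤ ∑' i, lam i ^ α := tsum_nonneg fun i => Real.rpow_nonneg (hlam i) α
  have h1α : 0 < 1 - α := by linarith
  refine IsBigO.of_bound ((∑' i, lam i ^ α) * C * (1 + 1 / (1 - α))) ?_
  filter_upwards [eventually_gt_atTop 0] with t ht
  rw [Real.norm_of_nonneg toReal_nonneg, Real.norm_of_nonneg (by positivity)]
  exact toReal_le_of_le_ofReal (by positivity) (measure_lt_tsum_mul_le hmeas hnn hlam hα1 hsum
    hC.le (fun i => hX0.of_identDistrib (hident i)) ht)

/-- polynomial (α < 1) tail decay transfers from i.i.d. nonnegative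
summands to their weighted sum. -/
theorem stmt_12 {Ω : Type*} [MeasurableSpace Ω] (μ : Measure Ω) [IsProbabilityMeasure μ]
    (X : ℕ → Ω → ℝ) (hmeas : ∀ i, Measurable (X i))
    (hindep : iIndepFun X μ)
    (hident : ∀ i, IdentDistrib (X i) (X 0) μ μ)
    (hnn : ∀ i ω, 0 ≤ X i ω)
    (lam : ℕ → ℝ) (hlam : ∀ i, 0 ≤ lam i)
    (hconv : ∀ᵐ ω ∂μ, Summable fun i => lam i * X i ω)
    (α : ℝ) (hα0 : 0 < α) (hα1 : α < 1)
    (htail : (fun t => (μ {ω | t < X 0 ω}).toReal) =O[atTop] fun t => t ^ (-α))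
    (hsum : Summable fun i => lam i ^ α) :
    (fun t => (μ {ω | t < ∑' i, lam i * X i ω}).toReal) =O[atTop] fun t => t ^ (-α) :=
  stmt_12_general μ X hmeas hident hnn lam hlam α hα0 hα1 htail hsum
end

section
/- Let (X_i)_{i∈ℕ} be independent, identically distributed nonnegative real-valued random variables on a probability space (Ω, F, ℙ), and (λ_i)_{i∈ℕ} nonnegative reals with ℙ(Σ_i λ_i X_i < ∞) = 1. Let α > 0, and suppose there exists 0 < β < 1 with Σ_i λ_i^{1−β} < ∞ and Σ_i λ_i^{αβ} < ∞. If ℙ(X₀ > t) ∈ O(t^{−α}) as t → ∞, then ℙ(Σ_i λ_i X_i > t) ∈ O(t^{−α}) as t → ∞ (with implied constant proportional to C_{α,β} = (Σ_i λ_i^{αβ})·(Σ_i λ_i^{1−β})^{α}). -/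
open MeasureTheory ProbabilityTheory Filter Asymptotics

/-!
If `∑ λᵢ Xᵢ > t`, then with `A = ∑ λᵢ^(1-β)` some term satisfies `λᵢ Xᵢ > λᵢ^(1-β) t / A`,
i.e. `Xᵢ > t / (A λᵢ^β)`. A union bound and the tail estimate `ℙ(X₀ > s) ≤ K s^(-α)`, which holds
for all `s > 0` once it holds for large `s`, give
`ℙ(∑ λᵢ Xᵢ > t) ≤ K ∑ (A λᵢ^β / t)^α = K A^α (∑ λᵢ^(αβ)) t^(-α)`.
Any `c ≥ A` with `c > 0` may replace `A`; taking `c = A + 1` avoids the case of vanishing weights.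
-/

theorem exists_forall_le_mul_rpow_neg_of_isBigO {f : ℝ → ℝ} {α : ℝ} (hα : 0 ≤ α)
    (hf : ∀ s, f s ≤ 1) (h : f =O[atTop] fun t => t ^ (-α)) :
    ∃ K, ∀ s > 0, f s ≤ K * s ^ (-α) := by
  obtain ⟨C, hC⟩ := isBigO_iff.mp h
  obtain ⟨T, hT⟩ := eventually_atTop.mp hC
  set T' := max T 1
  refine ⟨max C (T' ^ α), fun s hs => ?_⟩
  have hs_nonneg : 0 ≤ s ^ (-α) := Real.rpow_nonneg hs.le _
  rcases le_or_gt T' s with hTs | hsT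
  · calc f s ≤ C * s ^ (-α) := by
          simpa [Real.norm_eq_abs, abs_of_nonneg hs_nonneg] using
            (le_abs_self _).trans (hT s ((le_max_left _ _).trans hTs))
      _ ≤ _ := by gcongr; exact le_max_left _ _
  · have hTpos : 0 < T' := hs.trans hsT
    calc f s ≤ 1 := hf s
      _ ≤ (T' / s) ^ α := Real.one_le_rpow ((one_le_div hs).mpr hsT.le) hα
      _ = T' ^ α * s ^ (-α) := by
          rw [Real.div_rpow hTpos.le hs.le, Real.rpow_neg hs.le, div_eq_mul_inv]
      _ ≤ _ := by gcongr; exact le_max_right _ _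

theorem exists_lt_of_tsum_lt_tsum {x w : ℕ → ℝ} (hw : Summable w) (hw0 : 0 ≤ ∑' i, w i)
    (h : ∑' i, w i < ∑' i, x i) : ∃ i, w i < x i := by
  by_contra! hxw
  refine h.not_ge ?_
  by_cases hx : Summable x
  · exact hx.tsum_le_tsum hxw hw
  · -- junk value: a non-summable series has `∑' = 0`
    rwa [tsum_eq_zero_of_not_summable hx]

section

variable {Ω : Type*} [MeasurableSpace Ω] {μ : Measure Ω}

theorem measureReal_iUnion_le_tsum {ι : Type*} [Countable ι] [IsFiniteMeasure μ]
    {s : ι → Set Ω} {b : ι → ℝ} (hb : Summable b)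
    (h : ∀ i, μ.real (s i) ≤ b i) : μ.real (⋃ i, s i) ≤ ∑' i, b i := by
  have hb0 : ∀ i, 0 ≤ b i := fun i => measureReal_nonneg.trans (h i)
  refine ENNReal.toReal_le_of_le_ofReal (tsum_nonneg hb0) ?_
  calc μ (⋃ i, s i) ≤ ∑' i, μ (s i) := measure_iUnion_le _
    _ ≤ ∑' i, ENNReal.ofReal (b i) := by
        gcongr with i
        rw [← ofReal_measureReal]
        exact ENNReal.ofReal_le_ofReal (h i)
    _ = ENNReal.ofReal (∑' i, b i) := (ENNReal.ofReal_tsum_of_nonneg hb0 hb).symm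

theorem measureReal_rpow_mul_lt_mul_le {Y : Ω → ℝ} {K α β c t l : ℝ}
    (hY : ∀ s > 0, μ.real {ω | s < Y ω} ≤ K * s ^ (-α)) (hc : 0 < c) (ht : 0 < t) (hl : 0 ≤ l) :
    μ.real {ω | l ^ (1 - β) * (t / c) < l * Y ω} ≤ K * c ^ α * t ^ (-α) * l ^ (α * β) := by
  rcases hl.eq_or_lt with rfl | hl
  · have hK : 0 ≤ K := by simpa using measureReal_nonneg.trans (hY 1 one_pos)
    have hempty : {ω | (0 : ℝ) ^ (1 - β) * (t / c) < 0 * Y ω} = ∅ := by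
      ext ω
      simpa using (mul_nonneg (Real.rpow_nonneg le_rfl _) (div_pos ht hc).le)
    rw [hempty, measureReal_empty]
    positivity
  · have hlβ : 0 < l ^ β := Real.rpow_pos_of_pos hl β
    set s := t / (c * l ^ β) with hs_def
    have hset : {ω | l ^ (1 - β) * (t / c) < l * Y ω} = {ω | s < Y ω} := by
      have : l ^ (1 - β) * (t / c) = l * s := by
        rw [Real.rpow_sub hl, Real.rpow_one, hs_def]
        field_simp
      simp_rw [this, mul_lt_mul_iff_right₀ hl]
    have hs : s ^ (-α) = c ^ α * t ^ (-α) * l ^ (α * β) := by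
      rw [hs_def, div_eq_mul_inv, Real.mul_rpow ht.le (by positivity),
        Real.inv_rpow (by positivity), Real.rpow_neg (by positivity : 0 ≤ c * l ^ β), inv_inv,
        Real.mul_rpow hc.le hlβ.le, ← Real.rpow_mul hl.le, mul_comm β α]
      ring
    rw [hset, mul_assoc K, mul_assoc K, ← hs]
    exact hY s (by positivity)

theorem measureReal_lt_tsum_mul_le [IsFiniteMeasure μ] {X : ℕ → Ω → ℝ} {lam : ℕ → ℝ}
    {K α β c t : ℝ} (hX : ∀ i, ∀ s > 0, μ.real {ω | s < X i ω} ≤ K * s ^ (-α))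
    (hlam : ∀ i, 0 ≤ lam i) (hsum1 : Summable fun i => lam i ^ (1 - β))
    (hsum2 : Summable fun i => lam i ^ (α * β)) (hc : ∑' i, lam i ^ (1 - β) ≤ c) (hc0 : 0 < c)
    (ht : 0 < t) :
    μ.real {ω | t < ∑' i, lam i * X i ω} ≤ K * c ^ α * (∑' i, lam i ^ (α * β)) * t ^ (-α) := by
  have hw : Summable fun i => lam i ^ (1 - β) * (t / c) := hsum1.mul_right _
  have hw_le : ∑' i, lam i ^ (1 - β) * (t / c) ≤ t := by
    rw [tsum_mul_right]
    calc (∑' i, lam i ^ (1 - β)) * (t / c) ≤ c * (t / c) := by gcongr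
      _ = t := by field_simp
  have hw_nonneg : 0 ≤ ∑' i, lam i ^ (1 - β) * (t / c) :=
    tsum_nonneg fun i => by have := hlam i; positivity
  have hincl : {ω | t < ∑' i, lam i * X i ω} ⊆
      ⋃ i, {ω | lam i ^ (1 - β) * (t / c) < lam i * X i ω} := fun ω hω =>
    Set.mem_iUnion.mpr (exists_lt_of_tsum_lt_tsum hw hw_nonneg (hw_le.trans_lt hω))
  calc μ.real {ω | t < ∑' i, lam i * X i ω}
      ≤ μ.real (⋃ i, {ω | lam i ^ (1 - β) * (t / c) < lam i * X i ω}) := measureReal_mono hincl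
    _ ≤ ∑' i, K * c ^ α * t ^ (-α) * lam i ^ (α * β) :=
        measureReal_iUnion_le_tsum (hsum2.mul_left _)
          fun i => measureReal_rpow_mul_lt_mul_le (hX i) hc0 ht (hlam i)
    _ = K * c ^ α * (∑' i, lam i ^ (α * β)) * t ^ (-α) := by rw [tsum_mul_left]; ring

end

theorem stmt_13_general {Ω : Type*} [MeasurableSpace Ω] (μ : Measure Ω) [IsProbabilityMeasure μ]
    (X : ℕ → Ω → ℝ)
    (hident : ∀ i, IdentDistrib (X i) (X 0) μ μ)
    (lam : ℕ → ℝ) (hlam : ∀ i, 0 ≤ lam i)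
    (α β : ℝ) (hα : 0 < α)
    (hsum1 : Summable fun i => lam i ^ (1 - β))
    (hsum2 : Summable fun i => lam i ^ (α * β))
    (htail : (fun t => (μ {ω | t < X 0 ω}).toReal) =O[atTop] fun t => t ^ (-α)) :
    (fun t => (μ {ω | t < ∑' i, lam i * X i ω}).toReal) =O[atTop] fun t => t ^ (-α) := by
  obtain ⟨K, hK⟩ := exists_forall_le_mul_rpow_neg_of_isBigO hα.le
    (fun _ => measureReal_le_one) htail
  have hX : ∀ i, ∀ s > 0, μ.real {ω | s < X i ω} ≤ K * s ^ (-α) := fun i s hs =>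
    (congrArg ENNReal.toReal ((hident i).measure_mem_eq measurableSet_Ioi)).trans_le (hK s hs)
  set c := ∑' i, lam i ^ (1 - β) + 1
  have hc0 : 0 < c := by
    have : 0 ≤ ∑' i, lam i ^ (1 - β) := tsum_nonneg fun i => Real.rpow_nonneg (hlam i) _
    positivity
  refine IsBigO.of_bound (K * c ^ α * ∑' i, lam i ^ (α * β)) ?_
  filter_upwards [eventually_gt_atTop 0] with t ht
  rw [Real.norm_of_nonneg ENNReal.toReal_nonneg, Real.norm_of_nonneg (Real.rpow_nonneg ht.le _)]
  exact measureReal_lt_tsum_mul_le hX hlam hsum1 hsum2 (le_add_of_nonneg_right zero_le_one) hc0 ht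

/-- polynomial tail decay of arbitrary exponent `α > 0` transfers from
i.i.d. nonnegative summands to their weighted sum. -/
theorem stmt_13 {Ω : Type*} [MeasurableSpace Ω] (μ : Measure Ω) [IsProbabilityMeasure μ]
    (X : ℕ → Ω → ℝ) (hmeas : ∀ i, Measurable (X i))
    (hindep : iIndepFun X μ)
    (hident : ∀ i, IdentDistrib (X i) (X 0) μ μ)
    (hnn : ∀ i ω, 0 ≤ X i ω)
    (lam : ℕ → ℝ) (hlam : ∀ i, 0 ≤ lam i)
    (hconv : ∀ᵐ ω ∂μ, Summable fun i => lam i * X i ω)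
    (α β : ℝ) (hα : 0 < α) (hβ0 : 0 < β) (hβ1 : β < 1)
    (hsum1 : Summable fun i => lam i ^ (1 - β))
    (hsum2 : Summable fun i => lam i ^ (α * β))
    (htail : (fun t => (μ {ω | t < X 0 ω}).toReal) =O[atTop] fun t => t ^ (-α)) :
    (fun t => (μ {ω | t < ∑' i, lam i * X i ω}).toReal) =O[atTop] fun t => t ^ (-α) :=
  stmt_13_general μ X hident lam hlam α β hα hsum1 hsum2 htail
end

section
/- Let (X_i)_{i∈ℕ} be independent, identically distributed nonnegative real-valued random variables on a probability space (Ω, F, ℙ), and (λ_i)_{i∈ℕ} nonnegative reals with ℙ(Σ_i λ_i X_i < ∞) = 1. Let α, k > 0, and suppose there exists 0 < β < 1 with Σ_i λ_i^{1−β} < ∞ and Σ_i λ_i^{αβ} < ∞. If ℙ(X₀ > t) ∈ O(exp(−t^{α}/k)) as t → ∞, then ℙ(Σ_i λ_i X_i > t) ∈ O(exp(−C_{α,β}^{−1}·t^{α}/k)) as t → ∞, where C_{α,β} = (Σ_i λ_i^{αβ})·(Σ_i λ_i^{1−β})^{α}. -/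
/-!
If `∑ λ_i X_i > t` then, with `S = ∑ λ_i^{1-β}`, some summand exceeds its share
`λ_i^{1-β} t / S`, i.e. `X_i > λ_i^{-β} t / S`. With `v = (t/S)^α / k` and `w_i = λ_i^{αβ}`,
the tail hypothesis (which, probabilities being at most 1, holds with a constant `C` for
all `s ≥ 0`) bounds the probability of this by `C exp(-v / w_i)`, and since
`w_i ≤ T = ∑ λ_j^{αβ}` we have `exp(-v / w_i) ≤ K w_i exp(-v / T)` for large `v`.
A union bound over `i` gives `K C T exp(-v / T)`, and `v / T = (T S^α)⁻¹ t^α / k`.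
-/

open MeasureTheory ProbabilityTheory Filter Asymptotics Set Real

theorem exp_neg_div_le_mul_exp_neg_div {v₀ v w T : ℝ} (hv₀ : 0 < v₀) (hv : v₀ ≤ v)
    (hw : 0 < w) (hwT : w ≤ T) :
    exp (-(v / w)) ≤ exp (v₀ / T) / v₀ * exp (-(v / T)) * w := by
  have hmain : exp (-((v - v₀) / w)) ≤ exp (-((v - v₀) / T)) :=
    exp_le_exp.2 (neg_le_neg (div_le_div_of_nonneg_left (sub_nonneg.2 hv) hw hwT))
  have hrest : exp (-(v₀ / w)) ≤ w / v₀ := by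
    rw [exp_neg, inv_le_comm₀ (exp_pos _) (by positivity), inv_div]
    linarith [add_one_le_exp (v₀ / w)]
  calc exp (-(v / w)) = exp (-((v - v₀) / w)) * exp (-(v₀ / w)) := by
        rw [← exp_add]; ring_nf
    _ ≤ exp (-((v - v₀) / T)) * (w / v₀) :=
        mul_le_mul hmain hrest (exp_pos _).le (exp_pos _).le
    _ = exp (v₀ / T) / v₀ * exp (-(v / T)) * w := by
        rw [show -((v - v₀) / T) = v₀ / T + -(v / T) by ring, exp_add]; ring

theorem exists_lt_of_lt_tsum {ι : Type*} {c f : ι → ℝ} {t : ℝ} (hc : Summable c)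
    (ht : 0 ≤ t) (hct : ∑' i, c i ≤ t) (h : t < ∑' i, f i) : ∃ i, c i < f i := by
  by_contra! hfc
  by_cases hf : Summable f
  · linarith [hf.tsum_le_tsum hfc hc]
  · rw [tsum_eq_zero_of_not_summable hf] at h
    linarith

theorem measure_lt_tsum_le_tsum_measure {Ω ι : Type*} [MeasurableSpace Ω] [Countable ι]
    (μ : Measure Ω) {c : ι → ℝ} {f : ι → Ω → ℝ} {t : ℝ} (hc : Summable c) (ht : 0 ≤ t)
    (hct : ∑' i, c i ≤ t) :
    μ {ω | t < ∑' i, f i ω} ≤ ∑' i, μ {ω | c i < f i ω} :=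
  (measure_mono fun _ hω => mem_iUnion.2 (exists_lt_of_lt_tsum hc ht hct hω)).trans
    (measure_iUnion_le _)

theorem exists_forall_le_mul_of_isBigO_atTop {f g : ℝ → ℝ} {a B : ℝ} (h : f =O[atTop] g)
    (hfB : ∀ s, f s ≤ B) (hB : 0 ≤ B) (hg : AntitoneOn g (Ici a)) (hg0 : ∀ s, 0 < g s) :
    ∃ C, 0 ≤ C ∧ ∀ s, a ≤ s → f s ≤ C * g s := by
  obtain ⟨c, hc⟩ := h.bound
  obtain ⟨t₀, ht₀⟩ := eventually_atTop.1 hc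
  set t₁ := max t₀ a
  refine ⟨max c (B / g t₁), le_max_of_le_right (div_nonneg hB (hg0 _).le), fun s hs => ?_⟩
  rcases le_total t₁ s with hs₁ | hs₁
  · calc f s ≤ ‖f s‖ := le_norm_self _
      _ ≤ c * ‖g s‖ := ht₀ s (le_of_max_le_left hs₁)
      _ = c * g s := by rw [norm_of_nonneg (hg0 s).le]
      _ ≤ max c (B / g t₁) * g s := mul_le_mul_of_nonneg_right (le_max_left _ _) (hg0 s).le
  · calc f s ≤ B / g t₁ * g t₁ := (hfB s).trans_eq (div_mul_cancel₀ B (hg0 _).ne').symm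
      _ ≤ B / g t₁ * g s :=
        mul_le_mul_of_nonneg_left (hg hs (le_max_right t₀ a : a ≤ t₁) hs₁)
          (div_nonneg hB (hg0 _).le)
      _ ≤ max c (B / g t₁) * g s := mul_le_mul_of_nonneg_right (le_max_right _ _) (hg0 s).le

section WeightedTail

variable {Ω : Type*} [MeasurableSpace Ω] {μ : Measure Ω} [IsFiniteMeasure μ] {α k β C : ℝ}

theorem measure_rpow_mul_lt_mul_le {Y : Ω → ℝ} {a s v₀ T : ℝ} (hC0 : 0 ≤ C)
    (hC : ∀ s, 0 ≤ s → (μ {ω | s < Y ω}).toReal ≤ C * exp (-(s ^ α / k)))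
    (ha : 0 < a) (hs : 0 ≤ s) (hv₀ : 0 < v₀) (hv : v₀ ≤ s ^ α / k) (haT : a ^ (α * β) ≤ T) :
    μ {ω | a ^ (1 - β) * s < a * Y ω} ≤
      ENNReal.ofReal (C * (exp (v₀ / T) / v₀ * exp (-(s ^ α / k / T))) * a ^ (α * β)) := by
  have hset : {ω | a ^ (1 - β) * s < a * Y ω} = {ω | a ^ (-β) * s < Y ω} := by
    ext ω
    show a ^ (1 - β) * s < a * Y ω ↔ a ^ (-β) * s < Y ω
    rw [sub_eq_add_neg, rpow_add ha, rpow_one, mul_assoc,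
      mul_lt_mul_iff_right₀ ha]
  have hexp : (a ^ (-β) * s) ^ α / k = s ^ α / k / a ^ (α * β) := by
    rw [mul_rpow (rpow_nonneg ha.le _) hs, ← rpow_mul ha.le, show -β * α = -(α * β) by ring,
      rpow_neg ha.le]
    ring
  rw [hset, ← ENNReal.ofReal_toReal (measure_ne_top μ _)]
  refine ENNReal.ofReal_le_ofReal ?_
  calc (μ {ω | a ^ (-β) * s < Y ω}).toReal ≤ C * exp (-((a ^ (-β) * s) ^ α / k)) :=
        hC _ (by positivity)
    _ ≤ C * (exp (v₀ / T) / v₀ * exp (-(s ^ α / k / T)) * a ^ (α * β)) := by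
        rw [hexp]
        exact mul_le_mul_of_nonneg_left
          (exp_neg_div_le_mul_exp_neg_div hv₀ hv (rpow_pos_of_pos ha _) haT) hC0
    _ = _ := by ring

theorem measure_lt_tsum_mul_le_s14 {X : ℕ → Ω → ℝ} {lam : ℕ → ℝ} (hlam : ∀ i, 0 ≤ lam i)
    (hα : 0 ≤ α) (hk : 0 < k) (hβ : β ≠ 1) (hsum1 : Summable fun i => lam i ^ (1 - β))
    (hsum2 : Summable fun i => lam i ^ (α * β)) (hC0 : 0 ≤ C)
    (hC : ∀ i s, 0 ≤ s → (μ {ω | s < X i ω}).toReal ≤ C * exp (-(s ^ α / k)))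
    {t : ℝ} (ht : ∑' i, lam i ^ (1 - β) ≤ t) :
    (μ {ω | t < ∑' i, lam i * X i ω}).toReal ≤
      C * (exp (k⁻¹ / ∑' i, lam i ^ (α * β)) / k⁻¹) * (∑' i, lam i ^ (α * β)) *
        exp (-(((∑' i, lam i ^ (α * β)) * (∑' i, lam i ^ (1 - β)) ^ α)⁻¹ * t ^ α / k)) := by
  set S := ∑' i, lam i ^ (1 - β)
  set T := ∑' i, lam i ^ (α * β)
  have hS0 : 0 ≤ S := tsum_nonneg fun i => rpow_nonneg (hlam i) _
  have ht0 : 0 ≤ t := hS0.trans ht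
  set K := C * (exp (k⁻¹ / T) / k⁻¹ * exp (-((t / S) ^ α / k / T))) with hK_def
  have hK : 0 ≤ K := by positivity
  have hT0 : 0 ≤ T := tsum_nonneg fun i => rpow_nonneg (hlam i) _
  have hshares : ∑' i, lam i ^ (1 - β) * (t / S) ≤ t := by
    rw [tsum_mul_right]
    change S * (t / S) ≤ t
    rcases hS0.eq_or_lt with hS | hS
    · rw [← hS, zero_mul]; exact ht0
    · rw [mul_div_cancel₀ _ hS.ne']
  have hterm : ∀ i, μ {ω | lam i ^ (1 - β) * (t / S) < lam i * X i ω} ≤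
      ENNReal.ofReal (K * lam i ^ (α * β)) := by
    intro i
    rcases (hlam i).eq_or_lt with h0 | hpos
    · simp [← h0, zero_rpow (sub_ne_zero.2 hβ.symm)]
    have hS : 0 < S :=
      (rpow_pos_of_pos hpos _).trans_le (hsum1.le_tsum i fun j _ => rpow_nonneg (hlam j) _)
    refine measure_rpow_mul_lt_mul_le hC0 (hC i) hpos (div_nonneg ht0 hS0) (inv_pos.2 hk) ?_
      (hsum2.le_tsum i fun j _ => rpow_nonneg (hlam j) _)
    rw [inv_eq_one_div]
    gcongr
    exact one_le_rpow ((one_le_div hS).2 ht) hα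
  have hsum : μ {ω | t < ∑' i, lam i * X i ω} ≤ ENNReal.ofReal (K * T) := by
    rw [← tsum_mul_left, ENNReal.ofReal_tsum_of_nonneg
      (fun i => mul_nonneg hK (rpow_nonneg (hlam i) _)) (hsum2.mul_left K)]
    exact (measure_lt_tsum_le_tsum_measure μ (hsum1.mul_right _) ht0 hshares).trans
      (ENNReal.tsum_le_tsum hterm)
  have hexponent : (t / S) ^ α / k / T = (T * S ^ α)⁻¹ * t ^ α / k := by
    rw [div_rpow ht0 hS0]; ring
  calc (μ {ω | t < ∑' i, lam i * X i ω}).toReal ≤ K * T :=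
        ENNReal.toReal_le_of_le_ofReal (mul_nonneg hK hT0) hsum
    _ = _ := by rw [hK_def, hexponent]; ring

end WeightedTail

theorem stmt_14_general {Ω : Type*} [MeasurableSpace Ω] (μ : Measure Ω) [IsProbabilityMeasure μ]
    (X : ℕ → Ω → ℝ)
    (hident : ∀ i, IdentDistrib (X i) (X 0) μ μ)
    (lam : ℕ → ℝ) (hlam : ∀ i, 0 ≤ lam i)
    (α k β : ℝ) (hα : 0 < α) (hk : 0 < k) (hβ1 : β < 1)
    (hsum1 : Summable fun i => lam i ^ (1 - β))
    (hsum2 : Summable fun i => lam i ^ (α * β))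
    (htail : (fun t => (μ {ω | t < X 0 ω}).toReal) =O[atTop]
      fun t => Real.exp (-(t ^ α / k))) :
    (fun t => (μ {ω | t < ∑' i, lam i * X i ω}).toReal) =O[atTop]
      fun t => Real.exp (-(((∑' i, lam i ^ (α * β)) * (∑' i, lam i ^ (1 - β)) ^ α)⁻¹ *
        t ^ α / k)) := by
  have hantitone : AntitoneOn (fun s => exp (-(s ^ α / k))) (Ici 0) := fun _ hx _ _ hxy =>
    exp_le_exp.2 (neg_le_neg (div_le_div_of_nonneg_right (rpow_le_rpow hx hxy hα.le) hk.le))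
  obtain ⟨C, hC0, hC⟩ := exists_forall_le_mul_of_isBigO_atTop htail
    (fun _ => ENNReal.toReal_le_of_le_ofReal zero_le_one (ENNReal.ofReal_one ▸ prob_le_one))
    zero_le_one hantitone fun _ => exp_pos _
  have hCi : ∀ i s, 0 ≤ s → (μ {ω | s < X i ω}).toReal ≤ C * exp (-(s ^ α / k)) :=
    fun i s hs => ((hident i).measure_mem_eq measurableSet_Ioi).symm ▸ hC s hs
  refine IsBigO.of_bound
    (C * (exp (k⁻¹ / ∑' i, lam i ^ (α * β)) / k⁻¹) * ∑' i, lam i ^ (α * β)) ?_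
  filter_upwards [eventually_ge_atTop (∑' i, lam i ^ (1 - β))] with t ht
  rw [norm_of_nonneg ENNReal.toReal_nonneg, norm_of_nonneg (exp_pos _).le]
  exact measure_lt_tsum_mul_le_s14 hlam hα.le hk hβ1.ne hsum1 hsum2 hC0 hCi ht

/-- stretched-exponential tail decay transfers from i.i.d. nonnegative
summands to their weighted sum, with loss factor
`C_{α,β} = (Σ λ_i^{αβ})·(Σ λ_i^{1-β})^α` in the exponent. -/
theorem stmt_14 {Ω : Type*} [MeasurableSpace Ω] (μ : Measure Ω) [IsProbabilityMeasure μ]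
    (X : ℕ → Ω → ℝ) (hmeas : ∀ i, Measurable (X i))
    (hindep : iIndepFun X μ)
    (hident : ∀ i, IdentDistrib (X i) (X 0) μ μ)
    (hnn : ∀ i ω, 0 ≤ X i ω)
    (lam : ℕ → ℝ) (hlam : ∀ i, 0 ≤ lam i)
    (hconv : ∀ᵐ ω ∂μ, Summable fun i => lam i * X i ω)
    (α k β : ℝ) (hα : 0 < α) (hk : 0 < k) (hβ0 : 0 < β) (hβ1 : β < 1)
    (hsum1 : Summable fun i => lam i ^ (1 - β))
    (hsum2 : Summable fun i => lam i ^ (α * β))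
    (htail : (fun t => (μ {ω | t < X 0 ω}).toReal) =O[atTop]
      fun t => Real.exp (-(t ^ α / k))) :
    (fun t => (μ {ω | t < ∑' i, lam i * X i ω}).toReal) =O[atTop]
      fun t => Real.exp (-(((∑' i, lam i ^ (α * β)) * (∑' i, lam i ^ (1 - β)) ^ α)⁻¹ *
        t ^ α / k)) :=
  stmt_14_general μ X hident lam hlam α k β hα hk hβ1 hsum1 hsum2 htail
end

section
/- Let B be a separable Banach space with its Borel σ-algebra, (Ω, F, ℙ) a probability space, H ∈ (0,1], and X : [0,1] × Ω → B a stochastic process such that almost surely t ↦ X(t) is continuous on [0,1] with X(0) = 0, and such that for all 0 ≤ s ≤ t ≤ 1 the B-valued random variables X(t) − X(s) and (t−s)^{H}·X(1) are identically distributed. Suppose α, k > 0 and ℙ(‖X(1)‖_B > b) ∈ O(exp(−b^{α}/k)) as b → ∞. Then for every 0 < η < H, ℙ( sup_{0 ≤ s < t ≤ 1} ‖X(t) − X(s)‖_B / (t−s)^{η} > b ) ∈ O(exp(−K_η^{−α}·b^{α}/k)) as b → ∞, where K_η = 4/((2^{η} − 1)(2^{1−η} − 1)). -/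
/-!
If a continuous path moves by at most `c * 2 ^ (-n η)` across every dyadic interval of level
`n`, chaining along the binary expansions of `s` and `t` gives `‖f t - f s‖ ≤ K_η c (t - s) ^ η`.
So the Hölder quotient can only exceed `b` if some dyadic increment at some level `n` exceeds
`(b / K_η) 2 ^ (-n η)`. By self-similarity each of the `2 ^ n` increments of level `n` is
distributed as `2 ^ (-n H) X(1)`, so this has probability at most
`2 ^ n ℙ(‖X(1)‖ > (b / K_η) 2 ^ (n (H - η)))`. As `η < H` the threshold grows geometrically in `n`,
and for large `b` the stretched-exponential tail turns the sum over `n` into a geometric series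
dominated by its first term `exp (-(b / K_η) ^ α / k)`.
-/

open MeasureTheory ProbabilityTheory Filter Asymptotics Topology
open scoped ENNReal

/-- The constant `K_η` of the Ciesielski norm equivalence. -/
noncomputable def ciesielskiConst (η : ℝ) : ℝ := 4 / ((2 ^ η - 1) * (2 ^ (1 - η) - 1))

lemma ciesielskiConst_pos {η : ℝ} (h0 : 0 < η) (h1 : η < 1) : 0 < ciesielskiConst η := by
  have hx : 1 < (2 : ℝ) ^ η := Real.one_lt_rpow (by norm_num) h0
  have hy : 1 < (2 : ℝ) ^ (1 - η) := Real.one_lt_rpow (by norm_num) (by linarith)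
  exact div_pos four_pos (mul_pos (by linarith) (by linarith))

lemma mul_one_add_div_one_sub_le_ciesielskiConst {η : ℝ} (h0 : 0 < η) (h1 : η < 1) :
    2 ^ η * ((1 + (1 / 2) ^ η) / (1 - (1 / 2) ^ η)) ≤ ciesielskiConst η := by
  set x : ℝ := 2 ^ η
  have hx1 : 1 < x := Real.one_lt_rpow (by norm_num) h0
  have hx2 : x < 2 := by simpa using Real.rpow_lt_rpow_of_exponent_lt (by norm_num : (1:ℝ) < 2) h1
  have hhalf : (1 / 2 : ℝ) ^ η = x⁻¹ := by
    rw [one_div, Real.inv_rpow (by norm_num)]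
  have htwo : (2 : ℝ) ^ (1 - η) = 2 / x := by
    rw [Real.rpow_sub (by norm_num), Real.rpow_one]
  rw [ciesielskiConst, hhalf, htwo]
  have hx0 : 0 < x - 1 := by linarith
  have h2x : 0 < 2 - x := by linarith
  have : (x - 1) * (2 / x - 1) = (x - 1) * (2 - x) / x := by field_simp
  rw [this, div_div_eq_mul_div, le_div_iff₀ (by positivity)]
  field_simp
  nlinarith [sq_nonneg (2 * x - 1)]

lemma Nat.floor_two_mul_le {x : ℝ} (hx : 0 ≤ x) : ⌊2 * x⌋₊ ≤ 2 * ⌊x⌋₊ + 1 := by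
  have h : 2 * x < ((2 * ⌊x⌋₊ + 1 + 1 : ℕ) : ℝ) := by
    push_cast
    linarith [Nat.lt_floor_add_one x]
  exact Nat.lt_succ_iff.mp ((Nat.floor_lt (by positivity)).mpr h)

lemma Nat.two_mul_floor_le {x : ℝ} (hx : 0 ≤ x) : 2 * ⌊x⌋₊ ≤ ⌊2 * x⌋₊ :=
  Nat.le_floor (by push_cast; linarith [Nat.floor_le hx])

lemma Nat.floor_mul_two_pow_le {t : ℝ} (ht : t ≤ 1) (n : ℕ) : ⌊t * 2 ^ n⌋₊ ≤ 2 ^ n :=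
  Nat.floor_le_of_le (by push_cast; nlinarith [pow_pos (two_pos : (0:ℝ) < 2) n])

def DyadicHolderWith {E : Type*} [NormedAddCommGroup E] (c η : ℝ) (f : ℝ → E) : Prop :=
  ∀ n j : ℕ, j < 2 ^ n → ‖f ((j + 1) / 2 ^ n) - f (j / 2 ^ n)‖ ≤ c * ((1 / 2) ^ n) ^ η

namespace DyadicHolderWith

variable {E : Type*} [NormedAddCommGroup E] {f : ℝ → E} {c η : ℝ}

lemma norm_sub_le_of_le_succ (hf : DyadicHolderWith c η f) (hc : 0 ≤ c) {n a b : ℕ}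
    (hab : a ≤ b) (hba : b ≤ a + 1) (hb : b ≤ 2 ^ n) :
    ‖f (b / 2 ^ n) - f (a / 2 ^ n)‖ ≤ c * ((1 / 2) ^ n) ^ η := by
  obtain rfl | rfl : b = a ∨ b = a + 1 := by omega
  · simp only [sub_self, norm_zero]
    positivity
  · exact_mod_cast hf n a (by omega)

lemma dist_dyadicFloor_le (hf : DyadicHolderWith c η f) (hcont : ContinuousOn f (Set.Icc 0 1))
    (hc : 0 ≤ c) (hη0 : 0 < η) {t : ℝ} (ht0 : 0 ≤ t) (ht1 : t ≤ 1) (n : ℕ) :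
    dist (f (⌊t * 2 ^ n⌋₊ / 2 ^ n)) (f t)
      ≤ c * (1 / 2) ^ η * ((1 / 2) ^ η) ^ n / (1 - (1 / 2) ^ η) := by
  set g : ℕ → ℝ := fun m => ⌊t * 2 ^ m⌋₊ / 2 ^ m
  have hg : Tendsto g atTop (𝓝 t) :=
    (tendsto_nat_floor_mul_div_atTop ht0).comp (tendsto_pow_atTop_atTop_of_one_lt one_lt_two)
  have hg_mem : ∀ m, g m ∈ Set.Icc (0 : ℝ) 1 := fun m =>
    ⟨by positivity, (div_le_iff₀ (by positivity)).2 (Nat.floor_le (by positivity)) |>.trans ht1⟩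
  have hfg : Tendsto (fun m => f (g m)) atTop (𝓝 (f t)) :=
    (hcont t ⟨ht0, ht1⟩).tendsto.comp
      (tendsto_nhdsWithin_iff.2 ⟨hg, Eventually.of_forall hg_mem⟩)
  refine dist_le_of_le_geometric_of_tendsto _ _
    (Real.rpow_lt_one (by norm_num) (by norm_num) hη0) (fun m => ?_) hfg n
  have hx : 0 ≤ t * 2 ^ m := by positivity
  have hdouble : t * 2 ^ (m + 1) = 2 * (t * 2 ^ m) := by ring
  have hlow : 2 * ⌊t * 2 ^ m⌋₊ ≤ ⌊t * 2 ^ (m + 1)⌋₊ := by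
    rw [hdouble]; exact Nat.two_mul_floor_le hx
  have hup : ⌊t * 2 ^ (m + 1)⌋₊ ≤ 2 * ⌊t * 2 ^ m⌋₊ + 1 := by
    rw [hdouble]; exact Nat.floor_two_mul_le hx
  have hstep := hf.norm_sub_le_of_le_succ hc hlow hup (Nat.floor_mul_two_pow_le ht1 _)
  have hgm : g m = ((2 * ⌊t * 2 ^ m⌋₊ : ℕ) : ℝ) / 2 ^ (m + 1) := by
    simp only [g]
    push_cast
    ring
  rw [dist_comm, dist_eq_norm, hgm]
  refine hstep.trans_eq ?_
  rw [← Real.rpow_pow_comm (by norm_num), pow_succ]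
  ring

lemma norm_sub_le (hf : DyadicHolderWith c η f) (hcont : ContinuousOn f (Set.Icc 0 1))
    (hc : 0 ≤ c) (hη0 : 0 < η) (hη1 : η < 1) {s t : ℝ} (hs0 : 0 ≤ s) (hst : s < t)
    (ht1 : t ≤ 1) :
    ‖f t - f s‖ ≤ ciesielskiConst η * c * (t - s) ^ η := by
  set r : ℝ := (1 / 2) ^ η
  have hr1 : r < 1 := Real.rpow_lt_one (by norm_num) (by norm_num) hη0
  obtain ⟨n, hn1, hn2⟩ := exists_nat_pow_near_of_lt_one (sub_pos.2 hst) (by linarith)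
    (by norm_num : (0 : ℝ) < 1 / 2) (by norm_num)
  set sn : ℝ := ⌊s * 2 ^ n⌋₊ / 2 ^ n
  set tn : ℝ := ⌊t * 2 ^ n⌋₊ / 2 ^ n
  have hfloor : ⌊s * 2 ^ n⌋₊ ≤ ⌊t * 2 ^ n⌋₊ := Nat.floor_le_floor (by gcongr)
  have hfloor' : ⌊t * 2 ^ n⌋₊ ≤ ⌊s * 2 ^ n⌋₊ + 1 := by
    rw [← Nat.floor_add_one (by positivity)]
    refine Nat.floor_le_floor ?_
    have : (1 / 2 : ℝ) ^ n * 2 ^ n = 1 := by rw [← mul_pow]; norm_num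
    nlinarith [pow_pos (two_pos : (0 : ℝ) < 2) n]
  have hmid := hf.norm_sub_le_of_le_succ hc hfloor hfloor' (Nat.floor_mul_two_pow_le ht1 n)
  have happ_t := hf.dist_dyadicFloor_le hcont hc hη0 (hs0.trans hst.le) ht1 n
  have happ_s := hf.dist_dyadicFloor_le hcont hc hη0 hs0 (hst.le.trans ht1) n
  have hscale : ((1 / 2 : ℝ) ^ n) ^ η ≤ 2 ^ η * (t - s) ^ η := by
    rw [← Real.mul_rpow (by norm_num) (by linarith)]
    exact Real.rpow_le_rpow (by positivity) (by rw [pow_succ] at hn1; linarith) hη0.le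
  have hr : 0 < (1 + r) / (1 - r) := div_pos (by positivity) (by linarith)
  rw [← dist_eq_norm]
  calc dist (f t) (f s) ≤ dist (f tn) (f t) + dist (f tn) (f sn) + dist (f sn) (f s) := by
        rw [dist_comm (f tn) (f t)]; exact dist_triangle4 _ _ _ _
    _ ≤ c * r * r ^ n / (1 - r) + c * ((1 / 2) ^ n) ^ η + c * r * r ^ n / (1 - r) := by
        rw [dist_eq_norm (f tn) (f sn)]
        exact add_le_add (add_le_add happ_t hmid) happ_s
    _ = c * ((1 / 2) ^ n) ^ η * ((1 + r) / (1 - r)) := by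
        rw [← Real.rpow_pow_comm (by norm_num)]
        field_simp [(sub_pos.2 hr1).ne']
        ring
    _ ≤ c * (2 ^ η * (t - s) ^ η) * ((1 + r) / (1 - r)) := by gcongr
    _ = c * (t - s) ^ η * (2 ^ η * ((1 + r) / (1 - r))) := by ring
    _ ≤ c * (t - s) ^ η * ciesielskiConst η := by
        gcongr
        exact mul_one_add_div_one_sub_le_ciesielskiConst hη0 hη1
    _ = ciesielskiConst η * c * (t - s) ^ η := by ring

end DyadicHolderWith

lemma exp_neg_mul_two_pow_rpow_le {u p : ℝ} (hu : 0 ≤ u) (h : Real.log 4 ≤ u * (p * Real.log 2))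
    (n : ℕ) : Real.exp (-(u * ((2 : ℝ) ^ n) ^ p)) ≤ Real.exp (-u) * (1 / 4) ^ n := by
  have hpow : ((2 : ℝ) ^ n) ^ p = Real.exp (n * (p * Real.log 2)) := by
    rw [Real.rpow_def_of_pos (by positivity), Real.log_pow]
    ring_nf
  have hquarter : (1 / 4 : ℝ) ^ n = Real.exp (n * -Real.log 4) := by
    rw [Real.exp_nat_mul, Real.exp_neg, Real.exp_log (by norm_num), one_div]
  rw [hquarter, ← Real.exp_add, Real.exp_le_exp, hpow]
  have hlin := Real.add_one_le_exp (n * (p * Real.log 2))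
  nlinarith [mul_nonneg hu (sub_nonneg.2 hlin),
    mul_nonneg (Nat.cast_nonneg (α := ℝ) n) (sub_nonneg.2 h)]

lemma tsum_two_pow_mul_le_of_tail {T : ℝ → ℝ≥0∞} {C b₀ α k p c : ℝ}
    (hT : ∀ y, b₀ ≤ y → T y ≤ ENNReal.ofReal (C * Real.exp (-(y ^ α / k))))
    (hC : 0 ≤ C) (hk : 0 ≤ k) (hp : 0 ≤ p) (hc : 0 ≤ c) (hcb : b₀ ≤ c)
    (hlarge : Real.log 4 ≤ c ^ α / k * (p * α * Real.log 2)) :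
    ∑' n : ℕ, 2 ^ n * T (c * (2 ^ n) ^ p) ≤ ENNReal.ofReal (2 * C * Real.exp (-(c ^ α / k))) := by
  set u := c ^ α / k
  have hterm : ∀ n : ℕ, 2 ^ n * T (c * (2 ^ n) ^ p)
      ≤ ENNReal.ofReal (C * Real.exp (-u) * (1 / 2) ^ n) := by
    intro n
    have hgrow : 1 ≤ ((2 : ℝ) ^ n) ^ p := Real.one_le_rpow (one_le_pow₀ one_le_two) hp
    have hexponent : (c * (2 ^ n) ^ p) ^ α / k = u * ((2 : ℝ) ^ n) ^ (p * α) := by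
      rw [Real.mul_rpow hc (by positivity), ← Real.rpow_mul (by positivity)]
      ring
    have hhalf : (2 : ℝ) ^ n * (1 / 4) ^ n = (1 / 2) ^ n := by
      rw [← mul_pow]
      norm_num
    calc 2 ^ n * T (c * (2 ^ n) ^ p)
        ≤ 2 ^ n * ENNReal.ofReal (C * Real.exp (-(u * ((2 : ℝ) ^ n) ^ (p * α)))) := by
          rw [← hexponent]
          exact mul_le_mul_right (hT _ (hcb.trans (le_mul_of_one_le_right hc hgrow))) _
      _ ≤ 2 ^ n * ENNReal.ofReal (C * (Real.exp (-u) * (1 / 4) ^ n)) := by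
          gcongr
          exact exp_neg_mul_two_pow_rpow_le (by positivity) (by linarith) n
      _ = ENNReal.ofReal (C * Real.exp (-u) * (1 / 2) ^ n) := by
          rw [← hhalf, ← ENNReal.ofReal_ofNat 2, ← ENNReal.ofReal_pow zero_le_two,
            ← ENNReal.ofReal_mul (by positivity)]
          ring_nf
  calc ∑' n : ℕ, 2 ^ n * T (c * (2 ^ n) ^ p)
      ≤ ∑' n : ℕ, ENNReal.ofReal (C * Real.exp (-u) * (1 / 2) ^ n) := ENNReal.tsum_le_tsum hterm
    _ = ENNReal.ofReal (∑' n : ℕ, C * Real.exp (-u) * (1 / 2) ^ n) :=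
      (ENNReal.ofReal_tsum_of_nonneg (fun n => by positivity)
        (summable_geometric_two.mul_left _)).symm
    _ = ENNReal.ofReal (2 * C * Real.exp (-u)) := by
      rw [tsum_mul_left, tsum_geometric_two]
      ring_nf

section SelfSimilar

variable {Ω B : Type*} [MeasurableSpace Ω] {μ : Measure Ω}
  [NormedAddCommGroup B] [NormedSpace ℝ B] [MeasurableSpace B] [OpensMeasurableSpace B]

lemma measure_lt_norm_eq_of_identDistrib_smul {Y Z : Ω → B} {a : ℝ}
    (h : IdentDistrib Y (fun ω => a • Z ω) μ μ) (ha : 0 < a) (θ : ℝ) :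
    μ {ω | θ < ‖Y ω‖} = μ {ω | θ / a < ‖Z ω‖} := by
  have hS : MeasurableSet {v : B | θ < ‖v‖} := measurableSet_lt measurable_const measurable_norm
  rw [show {ω | θ < ‖Y ω‖} = Y ⁻¹' {v | θ < ‖v‖} from rfl, h.measure_mem_eq hS]
  congr 1
  ext ω
  simp [norm_smul, abs_of_pos ha, div_lt_iff₀' ha]

lemma measure_holderQuotient_gt_le {X : ℝ → Ω → B} {H η c : ℝ}
    (hcont : ∀ᵐ ω ∂μ, ContinuousOn (fun t => X t ω) (Set.Icc 0 1))
    (hss : ∀ s t : ℝ, 0 ≤ s → s ≤ t → t ≤ 1 →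
      IdentDistrib (fun ω => X t ω - X s ω) (fun ω => (t - s) ^ H • X 1 ω) μ μ)
    (hη0 : 0 < η) (hη1 : η < 1) (hc : 0 ≤ c) :
    μ {ω | ∃ s t : ℝ, 0 ≤ s ∧ s < t ∧ t ≤ 1 ∧
        ciesielskiConst η * c < ‖X t ω - X s ω‖ / (t - s) ^ η}
      ≤ ∑' n : ℕ, 2 ^ n * μ {ω | c * (2 ^ n) ^ (H - η) < ‖X 1 ω‖} := by
  set A : ℕ → ℕ → Set Ω := fun n j =>
    {ω | c * ((1 / 2) ^ n) ^ η < ‖X ((j + 1) / 2 ^ n) ω - X (j / 2 ^ n) ω‖}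
  have hsub : ∀ᵐ ω ∂μ, ω ∈ {ω | ∃ s t : ℝ, 0 ≤ s ∧ s < t ∧ t ≤ 1 ∧
      ciesielskiConst η * c < ‖X t ω - X s ω‖ / (t - s) ^ η} →
      ω ∈ ⋃ n, ⋃ j ∈ Finset.range (2 ^ n), A n j := by
    filter_upwards [hcont] with ω hω ⟨s, t, hs0, hst, ht1, hquot⟩
    by_contra hnot
    simp only [A, Set.mem_iUnion, Finset.mem_range, Set.mem_ofPred_eq, exists_prop, not_exists,
      not_and, not_lt] at hnot
    have hholder :=
      DyadicHolderWith.norm_sub_le (f := fun t => X t ω) hnot hω hc hη0 hη1 hs0 hst ht1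
    rw [lt_div_iff₀ (Real.rpow_pos_of_pos (sub_pos.2 hst) η)] at hquot
    linarith
  have hA : ∀ n j, j < 2 ^ n → μ (A n j) = μ {ω | c * (2 ^ n) ^ (H - η) < ‖X 1 ω‖} := by
    intro n j hj
    have hlen : ((j : ℝ) + 1) / 2 ^ n - j / 2 ^ n = (1 / 2) ^ n := by
      rw [one_div_pow]
      ring
    have hj' : (j : ℝ) + 1 ≤ 2 ^ n := by exact_mod_cast hj
    rw [measure_lt_norm_eq_of_identDistrib_smul
      (hss _ _ (by positivity) (by gcongr; linarith) ((div_le_one (by positivity)).2 hj'))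
      (by rw [hlen]; positivity), hlen, mul_div_assoc, ← Real.rpow_sub (by positivity),
      one_div_pow, one_div, Real.inv_rpow (by positivity), ← Real.rpow_neg (by positivity),
      neg_sub]
  calc _ ≤ μ (⋃ n, ⋃ j ∈ Finset.range (2 ^ n), A n j) := measure_mono_ae hsub
    _ ≤ ∑' n, μ (⋃ j ∈ Finset.range (2 ^ n), A n j) := measure_iUnion_le _
    _ ≤ ∑' n, ∑ j ∈ Finset.range (2 ^ n), μ (A n j) :=
      ENNReal.tsum_le_tsum fun n => measure_biUnion_finset_le _ _
    _ = ∑' n : ℕ, 2 ^ n * μ {ω | c * (2 ^ n) ^ (H - η) < ‖X 1 ω‖} := by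
      congr 1
      ext n
      rw [Finset.sum_congr rfl fun j hj => hA n j (Finset.mem_range.1 hj), Finset.sum_const,
        Finset.card_range, nsmul_eq_mul]
      push_cast
      rfl

end SelfSimilar

theorem stmt_16_general {B : Type*} [NormedAddCommGroup B] [NormedSpace ℝ B]
    [MeasurableSpace B] [BorelSpace B]
    {Ω : Type*} [MeasurableSpace Ω] (μ : Measure Ω) [IsProbabilityMeasure μ]
    (H : ℝ) (hH1 : H ≤ 1)
    (X : ℝ → Ω → B)
    (hcont : ∀ᵐ ω ∂μ,
      ContinuousOn (fun t => X t ω) (Set.Icc (0:ℝ) 1) ∧ X 0 ω = 0)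
    (hss : ∀ s t : ℝ, 0 ≤ s → s ≤ t → t ≤ 1 →
      IdentDistrib (fun ω => X t ω - X s ω) (fun ω => (t - s) ^ H • X 1 ω) μ μ)
    (α k : ℝ) (hα : 0 < α) (hk : 0 < k)
    (htail : (fun b => (μ {ω | b < ‖X 1 ω‖}).toReal) =O[atTop]
      fun b => Real.exp (-(b ^ α / k))) :
    ∀ η : ℝ, 0 < η → η < H →
      (fun b => (μ {ω | ∃ s t : ℝ, 0 ≤ s ∧ s < t ∧ t ≤ 1 ∧
          b < ‖X t ω - X s ω‖ / (t - s) ^ η}).toReal) =O[atTop]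
        fun b => Real.exp (-((4 / ((2 ^ η - 1) * (2 ^ (1 - η) - 1))) ^ (-α) *
          b ^ α / k)) := by
  intro η hη0 hηH
  have hη1 : η < 1 := hηH.trans_le hH1
  have hK : 0 < ciesielskiConst η := ciesielskiConst_pos hη0 hη1
  obtain ⟨C, hC, hCbound⟩ := htail.exists_pos
  obtain ⟨b₀, hb₀⟩ := eventually_atTop.1 hCbound.bound
  have hT : ∀ y, b₀ ≤ y → μ {ω | y < ‖X 1 ω‖} ≤ ENNReal.ofReal (C * Real.exp (-(y ^ α / k))) := by
    intro y hy
    have hy := hb₀ y hy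
    rw [Real.norm_of_nonneg ENNReal.toReal_nonneg, Real.norm_of_nonneg (Real.exp_nonneg _)] at hy
    exact (ENNReal.le_ofReal_iff_toReal_le (measure_ne_top _ _) (by positivity)).2 hy
  have hscale : Tendsto (fun b => b / ciesielskiConst η) atTop atTop :=
    tendsto_id.atTop_div_const hK
  have hlarge : ∀ᶠ c in atTop, Real.log 4 ≤ c ^ α / k * ((H - η) * α * Real.log 2) :=
    (((tendsto_rpow_atTop hα).atTop_div_const hk).atTop_mul_const
      (by have := Real.log_pos one_lt_two; positivity)).eventually_ge_atTop _
  refine isBigO_iff.2 ⟨2 * C, ?_⟩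
  filter_upwards [hscale.eventually (eventually_ge_atTop (max b₀ 0)), hscale.eventually hlarge]
    with b hb hbl
  have hevent := measure_holderQuotient_gt_le (hcont.mono fun _ h => h.1) hss hη0 hη1
    (le_of_max_le_right hb)
  have hsum := tsum_two_pow_mul_le_of_tail hT hC.le hk.le (by linarith)
    (le_of_max_le_right hb) (le_of_max_le_left hb) hbl
  rw [mul_div_cancel₀ _ hK.ne'] at hevent
  have hb0 : 0 ≤ b := by simpa using (le_div_iff₀ hK).1 (le_of_max_le_right hb)
  rw [Real.norm_of_nonneg ENNReal.toReal_nonneg, Real.norm_of_nonneg (Real.exp_nonneg _)]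
  refine (ENNReal.toReal_le_of_le_ofReal (by positivity) (hevent.trans hsum)).trans_eq ?_
  change _ = 2 * C * Real.exp (-(ciesielskiConst η ^ (-α) * b ^ α / k))
  rw [Real.div_rpow hb0 hK.le, Real.rpow_neg hK.le]
  ring_nf

/-- stretched-exponential tails of the marginal at time 1 transfer to
the η-Hölder seminorm of an `H`-self-similar process with stationary increments,
with the explicit constant `K_η = 4/((2^η−1)(2^{1−η}−1))`, for every `η < H`. -/
theorem stmt_16 {B : Type*} [NormedAddCommGroup B] [NormedSpace ℝ B] [CompleteSpace B]
    [TopologicalSpace.SeparableSpace B] [MeasurableSpace B] [BorelSpace B]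
    {Ω : Type*} [MeasurableSpace Ω] (μ : Measure Ω) [IsProbabilityMeasure μ]
    (H : ℝ) (hH0 : 0 < H) (hH1 : H ≤ 1)
    (X : ℝ → Ω → B)
    (hcont : ∀ᵐ ω ∂μ,
      ContinuousOn (fun t => X t ω) (Set.Icc (0:ℝ) 1) ∧ X 0 ω = 0)
    (hss : ∀ s t : ℝ, 0 ≤ s → s ≤ t → t ≤ 1 →
      IdentDistrib (fun ω => X t ω - X s ω) (fun ω => (t - s) ^ H • X 1 ω) μ μ)
    (α k : ℝ) (hα : 0 < α) (hk : 0 < k)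
    (htail : (fun b => (μ {ω | b < ‖X 1 ω‖}).toReal) =O[atTop]
      fun b => Real.exp (-(b ^ α / k))) :
    ∀ η : ℝ, 0 < η → η < H →
      (fun b => (μ {ω | ∃ s t : ℝ, 0 ≤ s ∧ s < t ∧ t ≤ 1 ∧
          b < ‖X t ω - X s ω‖ / (t - s) ^ η}).toReal) =O[atTop]
        fun b => Real.exp (-((4 / ((2 ^ η - 1) * (2 ^ (1 - η) - 1))) ^ (-α) *
          b ^ α / k)) :=
  stmt_16_general μ H hH1 X hcont hss α k hα hk htail
end

section
/- Let B be a separable Banach space with its Borel σ-algebra, (Ω, F, ℙ) a probability space, H ∈ (0,1], and X : [0,1] × Ω → B a stochastic process such that for all 0 ≤ s ≤ t ≤ 1 the B-valued random variables X(t) − X(s) and (t−s)^{H}·X(1) are identically distributed. Fix 0 < η < H and define the dyadic Ciesielski norm N(ω) = ‖X(1,ω)‖_B + sup_{j≥1} 2^{jη} · max_{1 ≤ k ≤ 2^{j−1}} ‖X(2k·2^{−j},ω) − 2·X((2k−1)·2^{−j},ω) + X((2k−2)·2^{−j},ω)‖_B. Then for every b > 0, ℙ(N > 4b) ≤ Σ_{j=1}^{∞}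 2^{j+1}·ℙ(‖X(1)‖_B > b·2^{j(H−η)}) + ℙ(‖X(1)‖_B > 2b). -/
open MeasureTheory ProbabilityTheory
open scoped ENNReal

/-! A dyadic second difference `X(2kr) - 2X((2k-1)r) + X((2k-2)r)`, `r = 2^{-j}`, is the difference
of two increments of length `2^{-j}`, so it can exceed `2b` (after the weight `2^{jη}`) only if one
of these increments exceeds `b`. By stationarity and self-similarity each increment is distributed
as `2^{-jH} X(1)`, which turns that event into `‖X(1)‖ > b 2^{j(H-η)}`. A union bound over the
`2^{j-1}` blocks of each level `j ≥ 1`, together with the event `‖X(1)‖ > 2b` for the first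
summand of the norm, gives the estimate. -/

section Dyadic

variable {B : Type*} [NormedAddCommGroup B] [NormedSpace ℝ B] {Ω : Type*}

noncomputable def dyadicSecondDiff (X : ℝ → Ω → B) (j k : ℕ) (ω : Ω) : B :=
  X ((2 * (k:ℝ)) * (2:ℝ) ^ (-(j:ℝ))) ω -
    (2:ℝ) • X ((2 * (k:ℝ) - 1) * (2:ℝ) ^ (-(j:ℝ))) ω +
    X ((2 * (k:ℝ) - 2) * (2:ℝ) ^ (-(j:ℝ))) ω

noncomputable def dyadicCiesielskiNorm (X : ℝ → Ω → B) (η : ℝ) (ω : Ω) : ℝ≥0∞ :=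
  ENNReal.ofReal ‖X 1 ω‖ +
    ⨆ j : ℕ, ⨆ _ : 1 ≤ j, ⨆ k ∈ Finset.Icc (1:ℕ) (2 ^ (j - 1)),
      ENNReal.ofReal ((2:ℝ) ^ ((j : ℝ) * η) * ‖dyadicSecondDiff X j k ω‖)

def dyadicBlockEvent (X : ℝ → Ω → B) (η b : ℝ) (j k : ℕ) : Set Ω :=
  {ω | b < (2:ℝ) ^ ((j:ℝ) * η) *
      ‖X ((2 * (k:ℝ)) * (2:ℝ) ^ (-(j:ℝ))) ω - X ((2 * (k:ℝ) - 1) * (2:ℝ) ^ (-(j:ℝ))) ω‖} ∪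
    {ω | b < (2:ℝ) ^ ((j:ℝ) * η) *
      ‖X ((2 * (k:ℝ) - 1) * (2:ℝ) ^ (-(j:ℝ))) ω - X ((2 * (k:ℝ) - 2) * (2:ℝ) ^ (-(j:ℝ))) ω‖}

lemma lt_mul_norm_sub_or_of_two_mul_lt {a b : ℝ} {x y z : B} (ha : 0 ≤ a)
    (h : 2 * b < a * ‖x - (2:ℝ) • y + z‖) : b < a * ‖x - y‖ ∨ b < a * ‖y - z‖ := by
  have hsplit : x - (2:ℝ) • y + z = (x - y) - (y - z) := by
    rw [two_smul]
    abel
  have htri := mul_le_mul_of_nonneg_left (norm_sub_le (x - y) (y - z)) ha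
  rw [hsplit] at h
  by_contra! hle
  linarith [hle.1, hle.2]

lemma lt_or_ofReal_lt_of_ofReal_two_mul_lt_add {c x : ℝ} {S : ℝ≥0∞}
    (h : ENNReal.ofReal (2 * c) < ENNReal.ofReal x + S) : c < x ∨ ENNReal.ofReal c < S := by
  refine or_iff_not_imp_left.2 fun hxc => ?_
  have hx : ENNReal.ofReal x ≤ ENNReal.ofReal c := ENNReal.ofReal_le_ofReal (not_lt.1 hxc)
  rw [ENNReal.ofReal_mul zero_le_two, ENNReal.ofReal_ofNat, two_mul] at h
  exact (ENNReal.add_lt_add_iff_left ENNReal.ofReal_ne_top).1 (h.trans_le (by gcongr))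

lemma setOf_dyadicCiesielskiNorm_gt_subset (X : ℝ → Ω → B) (η b : ℝ) :
    {ω | ENNReal.ofReal (4 * b) < dyadicCiesielskiNorm X η ω} ⊆
      (⋃ j : {j : ℕ // 1 ≤ j}, ⋃ k ∈ Finset.Icc (1:ℕ) (2 ^ ((j:ℕ) - 1)),
        dyadicBlockEvent X η b j k) ∪ {ω | 2 * b < ‖X 1 ω‖} := by
  intro ω hω
  rw [Set.mem_ofPred_eq, dyadicCiesielskiNorm, show 4 * b = 2 * (2 * b) by ring] at hω
  rcases lt_or_ofReal_lt_of_ofReal_two_mul_lt_add hω with hX1 | hsup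
  · exact Or.inr hX1
  simp only [lt_iSup_iff, ENNReal.ofReal_lt_ofReal_iff'] at hsup
  obtain ⟨j, hj, k, hk, hlt, -⟩ := hsup
  exact Or.inl <| Set.mem_iUnion.2 ⟨⟨j, hj⟩, Set.mem_biUnion hk <|
    lt_mul_norm_sub_or_of_two_mul_lt (by positivity) hlt⟩

end Dyadic

lemma lt_rpow_mul_norm_rpow_neg_rpow_smul_iff {B : Type*} [NormedAddCommGroup B]
    [NormedSpace ℝ B] {c : ℝ} (hc : 0 < c) (u η H b : ℝ) (x : B) :
    b < c ^ (u * η) * ‖(c ^ (-u)) ^ H • x‖ ↔ b * c ^ (u * (H - η)) < ‖x‖ := by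
  rw [norm_smul, Real.norm_of_nonneg (by positivity), ← Real.rpow_mul hc.le, ← mul_assoc,
    ← Real.rpow_add hc, show u * η + -u * H = -(u * (H - η)) by ring, Real.rpow_neg hc.le,
    inv_mul_eq_div, lt_div_iff₀ (by positivity)]

lemma two_mul_mul_two_rpow_neg_le_one {j k : ℕ} (hj : 1 ≤ j) (hk : k ≤ 2 ^ (j - 1)) :
    2 * (k:ℝ) * (2:ℝ) ^ (-(j:ℝ)) ≤ 1 := by
  have h2k : 2 * k ≤ 2 ^ j := by
    calc 2 * k ≤ 2 * 2 ^ (j - 1) := Nat.mul_le_mul_left _ hk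
      _ = 2 ^ j := by rw [← pow_succ', Nat.sub_add_cancel hj]
  rw [Real.rpow_neg zero_le_two, Real.rpow_natCast, ← div_eq_mul_inv, div_le_one (by positivity)]
  exact_mod_cast h2k

section SelfSimilar

variable {B : Type*} [NormedAddCommGroup B] [NormedSpace ℝ B] [MeasurableSpace B] [BorelSpace B]
  {Ω : Type*} [MeasurableSpace Ω] {μ : Measure Ω} {H : ℝ} {X : ℝ → Ω → B}

lemma measure_dyadic_increment_tail
    (hss : ∀ s t : ℝ, 0 ≤ s → s ≤ t → t ≤ 1 →
      IdentDistrib (fun ω => X t ω - X s ω) (fun ω => (t - s) ^ H • X 1 ω) μ μ)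
    (η b : ℝ) {j : ℕ} {s t : ℝ} (hs : 0 ≤ s) (ht : t ≤ 1) (hts : t - s = (2:ℝ) ^ (-(j:ℝ))) :
    μ {ω | b < (2:ℝ) ^ ((j:ℝ) * η) * ‖X t ω - X s ω‖} =
      μ {ω | b * (2:ℝ) ^ ((j:ℝ) * (H - η)) < ‖X 1 ω‖} := by
  have hst : s ≤ t := sub_nonneg.1 (hts ▸ by positivity)
  have hmeas : MeasurableSet {x : B | b < (2:ℝ) ^ ((j:ℝ) * η) * ‖x‖} :=
    measurableSet_lt measurable_const (measurable_norm.const_mul _)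
  have hid := (hss s t hs hst ht).measure_mem_eq hmeas
  simpa only [Set.preimage_ofPred_eq, hts, lt_rpow_mul_norm_rpow_neg_rpow_smul_iff two_pos]
    using hid

lemma measure_dyadicBlockEvent_le
    (hss : ∀ s t : ℝ, 0 ≤ s → s ≤ t → t ≤ 1 →
      IdentDistrib (fun ω => X t ω - X s ω) (fun ω => (t - s) ^ H • X 1 ω) μ μ)
    (η b : ℝ) {j k : ℕ} (hj : 1 ≤ j) (hk : k ∈ Finset.Icc 1 (2 ^ (j - 1))) :
    μ (dyadicBlockEvent X η b j k) ≤
      2 * μ {ω | b * (2:ℝ) ^ ((j:ℝ) * (H - η)) < ‖X 1 ω‖} := by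
  rw [Finset.mem_Icc] at hk
  have hk1 : (1:ℝ) ≤ k := by exact_mod_cast hk.1
  have hr : (0:ℝ) < (2:ℝ) ^ (-(j:ℝ)) := by positivity
  have hend := two_mul_mul_two_rpow_neg_le_one hj hk.2
  calc μ (dyadicBlockEvent X η b j k) ≤ _ := measure_union_le _ _
    _ = 2 * μ {ω | b * (2:ℝ) ^ ((j:ℝ) * (H - η)) < ‖X 1 ω‖} := by
      rw [measure_dyadic_increment_tail hss η b (by nlinarith) hend (by ring),
        measure_dyadic_increment_tail hss η b (by nlinarith) (by nlinarith) (by ring), two_mul]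

lemma measure_dyadicLevel_le
    (hss : ∀ s t : ℝ, 0 ≤ s → s ≤ t → t ≤ 1 →
      IdentDistrib (fun ω => X t ω - X s ω) (fun ω => (t - s) ^ H • X 1 ω) μ μ)
    (η b : ℝ) {j : ℕ} (hj : 1 ≤ j) :
    μ (⋃ k ∈ Finset.Icc (1:ℕ) (2 ^ (j - 1)), dyadicBlockEvent X η b j k) ≤
      2 ^ (j + 1) * μ {ω | b * (2:ℝ) ^ ((j:ℝ) * (H - η)) < ‖X 1 ω‖} := by
  set p := μ {ω | b * (2:ℝ) ^ ((j:ℝ) * (H - η)) < ‖X 1 ω‖}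
  calc μ (⋃ k ∈ Finset.Icc (1:ℕ) (2 ^ (j - 1)), dyadicBlockEvent X η b j k)
      ≤ ∑ k ∈ Finset.Icc (1:ℕ) (2 ^ (j - 1)), μ (dyadicBlockEvent X η b j k) :=
        measure_biUnion_finset_le _ _
    _ ≤ ∑ _k ∈ Finset.Icc (1:ℕ) (2 ^ (j - 1)), 2 * p :=
        Finset.sum_le_sum fun _ hk => measure_dyadicBlockEvent_le hss η b hj hk
    _ = 2 ^ (j - 1) * 2 * p := by
        rw [Finset.sum_const, Nat.card_Icc, Nat.add_sub_cancel, nsmul_eq_mul, mul_assoc]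
        push_cast
        rfl
    _ ≤ 2 ^ (j + 1) * p := by
        rw [← pow_succ]
        gcongr
        · norm_num
        · omega

end SelfSimilar

theorem stmt_17_general {B : Type*} [NormedAddCommGroup B] [NormedSpace ℝ B]
    [MeasurableSpace B] [BorelSpace B]
    {Ω : Type*} [MeasurableSpace Ω] (μ : Measure Ω)
    (H : ℝ)
    (X : ℝ → Ω → B)
    (hss : ∀ s t : ℝ, 0 ≤ s → s ≤ t → t ≤ 1 →
      IdentDistrib (fun ω => X t ω - X s ω) (fun ω => (t - s) ^ H • X 1 ω) μ μ)
    (η : ℝ) (b : ℝ) :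
    μ {ω | ENNReal.ofReal (4 * b) <
        ENNReal.ofReal ‖X 1 ω‖ +
          ⨆ j : ℕ, ⨆ _ : 1 ≤ j, ⨆ k ∈ Finset.Icc (1:ℕ) (2 ^ (j - 1)),
            ENNReal.ofReal ((2:ℝ) ^ ((j : ℝ) * η) *
              ‖X ((2 * (k:ℝ)) * (2:ℝ) ^ (-(j:ℝ))) ω -
                (2:ℝ) • X ((2 * (k:ℝ) - 1) * (2:ℝ) ^ (-(j:ℝ))) ω +
                X ((2 * (k:ℝ) - 2) * (2:ℝ) ^ (-(j:ℝ))) ω‖)} ≤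
      (∑' j : {j : ℕ // 1 ≤ j},
          (2 : ℝ≥0∞) ^ ((j : ℕ) + 1) *
            μ {ω | b * (2:ℝ) ^ (((j : ℕ) : ℝ) * (H - η)) < ‖X 1 ω‖}) +
        μ {ω | 2 * b < ‖X 1 ω‖} := by
  refine (measure_mono (setOf_dyadicCiesielskiNorm_gt_subset X η b)).trans <|
    (measure_union_le _ _).trans ?_
  gcongr
  refine (measure_iUnion_le _).trans (ENNReal.tsum_le_tsum fun j => ?_)
  exact measure_dyadicLevel_le hss η b j.2

/-- the dyadic chaining inequality for the Ciesielski norm of a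
process with stationary, self-similar increments. -/
theorem stmt_17 {B : Type*} [NormedAddCommGroup B] [NormedSpace ℝ B] [CompleteSpace B]
    [TopologicalSpace.SeparableSpace B] [MeasurableSpace B] [BorelSpace B]
    {Ω : Type*} [MeasurableSpace Ω] (μ : Measure Ω) [IsProbabilityMeasure μ]
    (H : ℝ) (hH0 : 0 < H) (hH1 : H ≤ 1)
    (X : ℝ → Ω → B)
    (hss : ∀ s t : ℝ, 0 ≤ s → s ≤ t → t ≤ 1 →
      IdentDistrib (fun ω => X t ω - X s ω) (fun ω => (t - s) ^ H • X 1 ω) μ μ)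
    (η : ℝ) (hη0 : 0 < η) (hηH : η < H) (b : ℝ) (hb : 0 < b) :
    μ {ω | ENNReal.ofReal (4 * b) <
        ENNReal.ofReal ‖X 1 ω‖ +
          ⨆ j : ℕ, ⨆ _ : 1 ≤ j, ⨆ k ∈ Finset.Icc (1:ℕ) (2 ^ (j - 1)),
            ENNReal.ofReal ((2:ℝ) ^ ((j : ℝ) * η) *
              ‖X ((2 * (k:ℝ)) * (2:ℝ) ^ (-(j:ℝ))) ω -
                (2:ℝ) • X ((2 * (k:ℝ) - 1) * (2:ℝ) ^ (-(j:ℝ))) ω +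
                X ((2 * (k:ℝ) - 2) * (2:ℝ) ^ (-(j:ℝ))) ω‖)} ≤
      (∑' j : {j : ℕ // 1 ≤ j},
          (2 : ℝ≥0∞) ^ ((j : ℕ) + 1) *
            μ {ω | b * (2:ℝ) ^ (((j : ℕ) : ℝ) * (H - η)) < ‖X 1 ω‖}) +
        μ {ω | 2 * b < ‖X 1 ω‖} :=
  stmt_17_general μ H X hss η b
end

section
/- Let B be a separable Banach space with its Borel σ-algebra, (Ω, F, ℙ) a probability space, H > 0 and 0 < η < H, and let X : [0,∞) × Ω → B be a stochastic process with almost surely continuous paths. Fix T > 0 and suppose that X is H-self-similar with scaling factor T in the sense that for every n and all times t₁, …, t_n ≥ 0, the B^n-valued random vectors (X(T·t₁), …, X(T·t_n)) and (T^{H}·X(t₁), …, T^{H}·X(t_n)) are identically distributed. Then for every b ≥ 0, ℙ( sup_{0 ≤ s < t ≤ T} ‖X(t) − X(s)‖_B/(t−s)^{η} ≤ b ) = ℙ( T^{H−η} · sup_{0 ≤ s < t ≤ 1} ‖X(t) − X(s)‖_B/(t−s)^{η} ≤ b ). -/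
/-!
Both events are determined, up to a null set, by the path at rational times: where the path is
continuous, the Hölder quotient is continuous on the triangle `{0 ≤ s < t ≤ 1}`, which is convex
with nonempty interior, so a bound at its rational points is a bound everywhere. After rescaling
time by `T`, the left event reads `(X (T q))_q ∈ A` and, since
`‖T^H x - T^H y‖ / (T t - T s)^η = T^(H-η) ‖x - y‖ / (t - s)^η`, the right event reads
`(T^H X q)_q ∈ A`, for one measurable set `A` of paths indexed by `ℚ≥0`. By self-similarity these
two processes have the same finite-dimensional distributions, hence the same law on the product
σ-algebra (a projective limit of finite measures is unique).
-/

open MeasureTheory ProbabilityTheory Set Filter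

theorem Convex.subset_closure_inter_of_dense {𝕜 E : Type*} [Field 𝕜] [LinearOrder 𝕜]
    [IsStrictOrderedRing 𝕜] [TopologicalSpace 𝕜] [OrderTopology 𝕜] [AddCommGroup E]
    [Module 𝕜 E] [TopologicalSpace E] [IsTopologicalAddGroup E] [ContinuousSMul 𝕜 E]
    {S D : Set E} (hS : Convex 𝕜 S) (hS₀ : (interior S).Nonempty) (hD : Dense D) :
    S ⊆ closure (S ∩ D) :=
  calc S ⊆ closure (interior S) :=
        (hS.closure_interior_eq_closure_of_nonempty_interior hS₀).symm ▸ subset_closure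
    _ ⊆ closure (interior S ∩ D) :=
        closure_minimal (hD.open_subset_closure_inter isOpen_interior) isClosed_closure
    _ ⊆ closure (S ∩ D) := closure_mono (inter_subset_inter_left _ interior_subset)

def orderedUnitPairs : Set (ℝ × ℝ) := {p | 0 ≤ p.1 ∧ p.1 < p.2 ∧ p.2 ≤ 1}

theorem convex_orderedUnitPairs : Convex ℝ orderedUnitPairs := by
  rintro ⟨s, t⟩ ⟨hs, hst, ht⟩ ⟨s', t'⟩ ⟨hs', hst', ht'⟩ a b ha hb hab
  simp only [orderedUnitPairs, mem_ofPred_eq, Prod.smul_mk, Prod.mk_add_mk, smul_eq_mul]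
  refine ⟨by positivity, ?_, by nlinarith⟩
  rcases ha.eq_or_lt with rfl | ha
  · obtain rfl : b = 1 := by linarith
    linarith
  · nlinarith

theorem interior_orderedUnitPairs_nonempty : (interior orderedUnitPairs).Nonempty := by
  have hopen : IsOpen {p : ℝ × ℝ | 0 < p.1 ∧ p.1 < p.2 ∧ p.2 < 1} :=
    (isOpen_lt continuous_const continuous_fst).inter
      ((isOpen_lt continuous_fst continuous_snd).inter (isOpen_lt continuous_snd continuous_const))
  refine ⟨(1 / 3, 2 / 3), interior_maximal ?_ hopen ⟨by norm_num, by norm_num, by norm_num⟩⟩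
  exact fun p ⟨h₀, h₁, h₂⟩ => ⟨h₀.le, h₁, h₂.le⟩

theorem forall_orderedUnitPairs_le_iff_forall_nnrat {g : ℝ → ℝ → ℝ}
    (hg : ContinuousOn (fun p : ℝ × ℝ => g p.1 p.2) orderedUnitPairs) (c : ℝ) :
    (∀ s t : ℝ, 0 ≤ s → s < t → t ≤ 1 → g s t ≤ c) ↔
      ∀ q r : ℚ≥0, q < r → r ≤ 1 → g q r ≤ c := by
  refine ⟨fun h q r hqr hr => h q r q.cast_nonneg (by exact_mod_cast hqr) (by exact_mod_cast hr),
    fun h s t hs hst ht => ?_⟩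
  have hdense : Dense (range fun q : ℚ × ℚ => ((q.1 : ℝ), (q.2 : ℝ))) :=
    Rat.denseRange_cast.prodMap Rat.denseRange_cast
  have hmem : (s, t) ∈ closure (orderedUnitPairs ∩ _) :=
    convex_orderedUnitPairs.subset_closure_inter_of_dense interior_orderedUnitPairs_nonempty
      hdense ⟨hs, hst, ht⟩
  refine ContinuousWithinAt.closure_le (f := fun p : ℝ × ℝ => g p.1 p.2) (g := fun _ => c) hmem
    ((hg _ ⟨hs, hst, ht⟩).mono inter_subset_left) continuousWithinAt_const ?_
  rintro _ ⟨⟨hq, hqr, hr⟩, ⟨q, r⟩, rfl⟩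
  dsimp only at hq hqr hr ⊢
  have hq0 : (0 : ℚ) ≤ q := by exact_mod_cast hq
  have hr0 : (0 : ℚ) ≤ r := by exact_mod_cast hq.trans hqr.le
  simpa using h ⟨q, hq0⟩ ⟨r, hr0⟩ (by exact_mod_cast hqr) (by exact_mod_cast hr)

theorem forall_lt_le_iff_forall_lt_le_one_mul {P : ℝ → ℝ → Prop} {U : ℝ} (hU : 0 < U) :
    (∀ s t : ℝ, 0 ≤ s → s < t → t ≤ U → P s t) ↔
      ∀ s t : ℝ, 0 ≤ s → s < t → t ≤ 1 → P (U * s) (U * t) := by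
  refine ⟨fun h s t hs hst ht => h _ _ (by positivity) (by gcongr) (by nlinarith),
    fun h s t hs hst ht => ?_⟩
  have := h (s / U) (t / U) (by positivity) (by gcongr) ((div_le_one hU).2 ht)
  rwa [mul_div_cancel₀ _ hU.ne', mul_div_cancel₀ _ hU.ne'] at this

theorem ContinuousOn.norm_sub_div_rpow {B : Type*} [SeminormedAddCommGroup B] {f : ℝ → B}
    {I : Set ℝ} (hf : ContinuousOn f I) (η : ℝ) :
    ContinuousOn (fun p : ℝ × ℝ => ‖f p.2 - f p.1‖ / (p.2 - p.1) ^ η)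
      {p | p.1 ∈ I ∧ p.2 ∈ I ∧ p.1 < p.2} := by
  have h₁ : ContinuousOn (fun p : ℝ × ℝ => f p.1) {p | p.1 ∈ I ∧ p.2 ∈ I ∧ p.1 < p.2} :=
    hf.comp continuousOn_fst fun p hp => hp.1
  have h₂ : ContinuousOn (fun p : ℝ × ℝ => f p.2) {p | p.1 ∈ I ∧ p.2 ∈ I ∧ p.1 < p.2} :=
    hf.comp continuousOn_snd fun p hp => hp.2.1
  refine (h₂.sub h₁).norm.div ((continuousOn_snd.sub continuousOn_fst).rpow_const ?_) ?_
  · exact fun p hp => Or.inl (sub_pos.2 hp.2.2).ne'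
  · exact fun p hp => (Real.rpow_pos_of_pos (sub_pos.2 hp.2.2) η).ne'

theorem norm_rpow_smul_sub_div_rpow {B : Type*} [SeminormedAddCommGroup B] [NormedSpace ℝ B]
    {T : ℝ} (hT : 0 < T) (H η : ℝ) (x y : B) {s t : ℝ} (hst : s ≤ t) :
    ‖T ^ H • x - T ^ H • y‖ / (T * t - T * s) ^ η = T ^ (H - η) * (‖x - y‖ / (t - s) ^ η) := by
  rw [← smul_sub, norm_smul, Real.norm_of_nonneg (by positivity), ← mul_sub,
    Real.mul_rpow hT.le (sub_nonneg.2 hst), mul_div_mul_comm, ← Real.rpow_sub hT]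

theorem ProbabilityTheory.identDistrib_pi_of_identDistrib_fin {ι Ω β : Type*} [Countable ι]
    [MeasurableSpace Ω] [MeasurableSpace β] {μ : Measure Ω} [IsFiniteMeasure μ]
    {Y Z : ι → Ω → β}
    (h : ∀ (n : ℕ) (t : Fin n → ι),
      IdentDistrib (fun ω k => Y (t k) ω) (fun ω k => Z (t k) ω) μ μ) :
    IdentDistrib (fun ω i => Y i ω) (fun ω i => Z i ω) μ μ := by
  have hfinset (I : Finset ι) :
      IdentDistrib (fun ω (i : I) => Y i ω) (fun ω (i : I) => Z i ω) μ μ := by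
    have hu : Measurable fun (v : Fin I.card → β) (i : I) => v (I.equivFin i) :=
      measurable_pi_lambda _ fun i => measurable_pi_apply _
    simpa [Function.comp_def] using (h I.card fun k => I.equivFin.symm k).comp hu
  have hY : AEMeasurable (fun ω i => Y i ω) μ := aemeasurable_pi_lambda _ fun i =>
    (measurable_pi_apply 0).comp_aemeasurable (h 1 fun _ => i).aemeasurable_fst
  have hZ : AEMeasurable (fun ω i => Z i ω) μ := aemeasurable_pi_lambda _ fun i =>
    (measurable_pi_apply 0).comp_aemeasurable (h 1 fun _ => i).aemeasurable_snd
  refine ⟨hY, hZ, IsProjectiveLimit.unique (P := fun I => (μ.map fun ω i => Z i ω).map I.restrict)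
    (fun I => ?_) fun _ => rfl⟩
  show _ = Measure.map _ _
  have hres : Measurable (I.restrict (π := fun _ : ι => β)) := Finset.measurable_restrict I
  rw [AEMeasurable.map_map_of_aemeasurable hres.aemeasurable hY,
    AEMeasurable.map_map_of_aemeasurable hres.aemeasurable hZ]
  exact (hfinset I).map_eq

section HolderSublevel

variable {B : Type*} [NormedAddCommGroup B]

/-- The path `v` is read as `T * q ↦ v q` for `q ∈ [0, 1] ∩ ℚ`. -/
def holderSublevel (T η b : ℝ) : Set (ℚ≥0 → B) :=
  {v | ∀ q r : ℚ≥0, q < r → r ≤ 1 → ‖v r - v q‖ / (T * r - T * q) ^ η ≤ b}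

theorem measurableSet_holderSublevel [MeasurableSpace B] [OpensMeasurableSpace B]
    [MeasurableSub₂ B] (T η b : ℝ) : MeasurableSet (holderSublevel (B := B) T η b) := by
  refine measurableSet_setOfPred.2 <| Measurable.forall fun q => Measurable.forall fun r =>
    measurable_const.imp <| measurable_const.imp <| measurableSet_setOfPred.1 <|
      measurableSet_le ?_ measurable_const
  exact ((measurable_pi_apply r).sub (measurable_pi_apply q)).norm.div_const _

theorem mem_holderSublevel_iff {f : ℝ → B} (hf : ContinuousOn f (Ici 0)) {T : ℝ} (hT : 0 < T)
    (η b : ℝ) :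
    (fun q : ℚ≥0 => f (T * q)) ∈ holderSublevel T η b ↔
      ∀ s t : ℝ, 0 ≤ s → s < t → t ≤ T → ‖f t - f s‖ / (t - s) ^ η ≤ b := by
  refine (forall_orderedUnitPairs_le_iff_forall_nnrat ?_ b).symm.trans
    (forall_lt_le_iff_forall_lt_le_one_mul (P := fun s t => ‖f t - f s‖ / (t - s) ^ η ≤ b) hT).symm
  refine (hf.norm_sub_div_rpow η).comp (continuous_const_smul T).continuousOn ?_
  rintro p ⟨hp₁, hp₁₂, -⟩
  exact ⟨show 0 ≤ T * p.1 by positivity, show 0 ≤ T * p.2 by nlinarith,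
    show T * p.1 < T * p.2 by gcongr⟩

theorem rpow_smul_mem_holderSublevel_iff [NormedSpace ℝ B] {f : ℝ → B}
    (hf : ContinuousOn f (Ici 0)) {T : ℝ} (hT : 0 < T) (H η b : ℝ) :
    (fun q : ℚ≥0 => T ^ H • f q) ∈ holderSublevel T η b ↔
      ∀ s t : ℝ, 0 ≤ s → s < t → t ≤ 1 → T ^ (H - η) * (‖f t - f s‖ / (t - s) ^ η) ≤ b := by
  refine Iff.symm <| (forall_orderedUnitPairs_le_iff_forall_nnrat ?_ b).trans ?_
  · refine continuousOn_const.mul ((hf.norm_sub_div_rpow η).mono ?_)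
    exact fun p ⟨hp₁, hp₁₂, _⟩ => ⟨hp₁, hp₁.trans hp₁₂.le, hp₁₂⟩
  · refine forall₂_congr fun q r => imp_congr_right fun hqr => imp_congr_right fun _ => ?_
    rw [norm_rpow_smul_sub_div_rpow hT H η _ _ (by exact_mod_cast hqr.le)]

end HolderSublevel

theorem stmt_18_general {B : Type*} [NormedAddCommGroup B] [NormedSpace ℝ B]
    [TopologicalSpace.SeparableSpace B] [MeasurableSpace B] [BorelSpace B]
    {Ω : Type*} [MeasurableSpace Ω] (μ : Measure Ω) [IsProbabilityMeasure μ]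
    (H η : ℝ)
    (X : ℝ → Ω → B)
    (hcont : ∀ᵐ ω ∂μ, ContinuousOn (fun t => X t ω) (Set.Ici (0:ℝ)))
    (T : ℝ) (hT : 0 < T)
    (hss : ∀ (n : ℕ) (t : Fin n → ℝ), (∀ i, 0 ≤ t i) →
      IdentDistrib (fun ω => fun i => X (T * t i) ω)
        (fun ω => fun i => T ^ H • X (t i) ω) μ μ)
    (b : ℝ) :
    μ {ω | ∀ s t : ℝ, 0 ≤ s → s < t → t ≤ T →
        ‖X t ω - X s ω‖ / (t - s) ^ η ≤ b} =
      μ {ω | ∀ s t : ℝ, 0 ≤ s → s < t → t ≤ 1 →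
        T ^ (H - η) * (‖X t ω - X s ω‖ / (t - s) ^ η) ≤ b} := by
  have hlaw : IdentDistrib (fun ω (q : ℚ≥0) => X (T * q) ω) (fun ω (q : ℚ≥0) => T ^ H • X q ω)
      μ μ :=
    identDistrib_pi_of_identDistrib_fin fun n t => hss n (fun k => t k) fun k => (t k).cast_nonneg
  have hleft : {ω | ∀ s t : ℝ, 0 ≤ s → s < t → t ≤ T → ‖X t ω - X s ω‖ / (t - s) ^ η ≤ b}
      =ᵐ[μ] (fun ω (q : ℚ≥0) => X (T * q) ω) ⁻¹' holderSublevel T η b :=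
    eventuallyEq_set.2 <| hcont.mono fun ω hω => (mem_holderSublevel_iff hω hT η b).symm
  have hright : {ω | ∀ s t : ℝ, 0 ≤ s → s < t → t ≤ 1 →
        T ^ (H - η) * (‖X t ω - X s ω‖ / (t - s) ^ η) ≤ b}
      =ᵐ[μ] (fun ω (q : ℚ≥0) => T ^ H • X q ω) ⁻¹' holderSublevel T η b :=
    eventuallyEq_set.2 <| hcont.mono fun ω hω =>
      (rpow_smul_mem_holderSublevel_iff hω hT H η b).symm
  rw [measure_congr hleft, measure_congr hright]
  exact hlaw.measure_mem_eq (measurableSet_holderSublevel T η b)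

/-- the scaling identity for Hölder seminorms of a self-similar
process with a.s. continuous paths. -/
theorem stmt_18 {B : Type*} [NormedAddCommGroup B] [NormedSpace ℝ B] [CompleteSpace B]
    [TopologicalSpace.SeparableSpace B] [MeasurableSpace B] [BorelSpace B]
    {Ω : Type*} [MeasurableSpace Ω] (μ : Measure Ω) [IsProbabilityMeasure μ]
    (H η : ℝ) (hH : 0 < H) (hη0 : 0 < η) (hηH : η < H)
    (X : ℝ → Ω → B)
    (hcont : ∀ᵐ ω ∂μ, ContinuousOn (fun t => X t ω) (Set.Ici (0:ℝ)))
    (T : ℝ) (hT : 0 < T)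
    (hss : ∀ (n : ℕ) (t : Fin n → ℝ), (∀ i, 0 ≤ t i) →
      IdentDistrib (fun ω => fun i => X (T * t i) ω)
        (fun ω => fun i => T ^ H • X (t i) ω) μ μ)
    (b : ℝ) (hb : 0 ≤ b) :
    μ {ω | ∀ s t : ℝ, 0 ≤ s → s < t → t ≤ T →
        ‖X t ω - X s ω‖ / (t - s) ^ η ≤ b} =
      μ {ω | ∀ s t : ℝ, 0 ≤ s → s < t → t ≤ 1 →
        T ^ (H - η) * (‖X t ω - X s ω‖ / (t - s) ^ η) ≤ b} :=
  stmt_18_general μ H η X hcont T hT hss b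
end
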